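/- arXiv:1802.00725 — 5 statements merged into one kernel-verified Lean document; each statement's English description precedes it below -/
import Mathlib

section
/- Let X be a Hausdorff space and let Y be a nonempty, compact, zero-dimensional, closed subset of X. Then the family { ⟨𝒱⟩ : 𝒱 is a finite cellular family in X and Y ∈ ⟨𝒱⟩ } is a local base for CL(X) at Y. -/
open Set Topology

/-- The hyperspace of nonempty closed subsets of a topological space `X`. -/
structure CL (X : Type*) [TopologicalSpace X] : Type _ where
  carrier : Set X
  isClosed' : IsClosed carrier
  nonempty' : carrier.Nonempty

/-- The basic Vietoris set `⟨𝒰⟩` determined by a finite family `𝒰` of subsets of `X`: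
all nonempty closed sets contained in `⋃ 𝒰` and meeting every member of `𝒰`. -/
def CL.box {X : Type*} [TopologicalSpace X] (𝒰 : Finset (Set X)) : Set (CL X) :=
  {A | A.carrier ⊆ ⋃₀ (𝒰 : Set (Set X)) ∧ ∀ U ∈ 𝒰, (A.carrier ∩ U).Nonempty}

/-- The Vietoris topology on `CL X`, generated by the sets `⟨𝒰⟩` where `𝒰` ranges over
finite families of open subsets of `X`. -/
instance CL.instTopologicalSpace (X : Type*) [TopologicalSpace X] :
    TopologicalSpace (CL X) :=
  TopologicalSpace.generateFrom
    {s | ∃ 𝒰 : Finset (Set X), (∀ U ∈ 𝒰, IsOpen U) ∧ s = CL.box 𝒰}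

/-- `p` is the limit of the set `S`: `p ∈ S` and `S \ U` is finite for every open
set `U` containing `p`. -/
def IsLimitOf {X : Type*} [TopologicalSpace X] (S : Set X) (p : X) : Prop :=
  p ∈ S ∧ ∀ U : Set X, IsOpen U → p ∈ U → (S \ U).Finite

/-- `S` is a nontrivial convergent sequence in `X`: a countably infinite set having
a limit point belonging to it. -/
def IsNontrivialConvergentSeq {X : Type*} [TopologicalSpace X] (S : Set X) : Prop :=
  S.Countable ∧ S.Infinite ∧ ∃ p, IsLimitOf S p

/-- The hyperspace `S_c(X)` of nontrivial convergent sequences in `X`, as a subset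
of `CL X` (with the subspace Vietoris topology). -/
def Sc (X : Type*) [TopologicalSpace X] : Set (CL X) :=
  {A | IsNontrivialConvergentSeq A.carrier}

/-- A finite cellular family in `X`: a finite pairwise disjoint family of nonempty
open subsets of `X`. -/
def IsCellular {X : Type*} [TopologicalSpace X] (𝒱 : Finset (Set X)) : Prop :=
  (∀ U ∈ 𝒱, IsOpen U ∧ U.Nonempty) ∧ (𝒱 : Set (Set X)).Pairwise Disjoint

/-!
Open Vietoris boxes are closed under finite intersections, so they form a base of `CL X`, and
it suffices to shrink an open box `⟨𝒰⟩ ∋ Y` to a cellular one. Being compact and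
zero-dimensional, `Y` splits into finitely many disjoint nonempty clopen pieces, each lying in
some member of `𝒰`, with every member of `𝒰` containing a whole piece. The pieces are disjoint
compact sets of a Hausdorff space, so they have disjoint open neighbourhoods; cutting each of
these down to the members of `𝒰` that contain its piece gives the cellular family.
-/

open TopologicalSpace

section Profinite

variable {X : Type*} [TopologicalSpace X] [CompactSpace X] [T2Space X] [TotallyDisconnectedSpace X]

theorem exists_clopen_partition_refining {𝒰 : Finset (Set X)} (h𝒰 : ∀ U ∈ 𝒰, IsOpen U)
    (hcover : ⋃₀ (𝒰 : Set (Set X)) = univ) (hne : ∀ U ∈ 𝒰, U.Nonempty) :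
    ∃ 𝒞 : Finset (Set X), (∀ C ∈ 𝒞, IsClopen C ∧ C.Nonempty) ∧
      (𝒞 : Set (Set X)).Pairwise Disjoint ∧ ⋃₀ (𝒞 : Set (Set X)) = univ ∧
      (∀ C ∈ 𝒞, ∃ U ∈ 𝒰, C ⊆ U) ∧ ∀ U ∈ 𝒰, ∃ C ∈ 𝒞, C ⊆ U := by
  classical
  choose p hp using hne
  -- The marker points `p U` make every `U` contain a whole piece: a piece inside `O y` that
  -- contains `p U` forces `y = p U ∈ U`.
  let O : X → Set X := fun y =>
    (⋂ U ∈ 𝒰.filter (y ∈ ·), U) \ ↑((𝒰.attach.image fun U => p U.1 U.2).erase y)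
  have hO_open (y : X) : IsOpen (O y) :=
    (isOpen_biInter_finset fun U hU => h𝒰 U (Finset.mem_filter.1 hU).1).sdiff
      (Finset.finite_toSet _).isClosed
  have hO_mem (y : X) : y ∈ O y :=
    ⟨mem_iInter₂.2 fun U hU => (Finset.mem_filter.1 hU).2, by simp⟩
  have hO_subset (y : X) (U : Set X) (hU : U ∈ 𝒰) (hyU : y ∈ U) : O y ⊆ U :=
    sdiff_subset.trans (biInter_subset_of_mem (Finset.mem_filter.2 ⟨hU, hyU⟩))
  have hO_marker (y : X) (U : Set X) (hU : U ∈ 𝒰) (hpU : p U hU ∈ O y) : y ∈ U := by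
    obtain rfl : p U hU = y := by
      by_contra h
      exact hpU.2 (Finset.mem_erase.2 ⟨h, Finset.mem_image_of_mem _ (Finset.mem_attach _ ⟨U, hU⟩)⟩)
    exact hp U hU
  have hO_cover : IsOpenCover fun y => (⟨O y, hO_open y⟩ : Opens X) :=
    .of_sets hO_open (eq_univ_of_forall fun y => mem_iUnion.2 ⟨y, hO_mem y⟩)
  obtain ⟨n, W, hW, hW_cover, hW_disj⟩ := hO_cover.exists_finite_nonempty_disjoint_clopen_cover
  refine ⟨Finset.univ.image fun j => (W j : Set X), ?_, ?_, ?_, ?_, ?_⟩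
  · simp only [Finset.mem_image, Finset.mem_univ, true_and, forall_exists_index,
      forall_apply_eq_imp_iff]
    exact fun j => ⟨(W j).isClopen,
      nonempty_iff_ne_empty.2 fun h => (hW j).1 (SetLike.coe_injective h)⟩
  · simp only [Finset.coe_image, Finset.coe_univ, image_univ]
    rintro _ ⟨i, rfl⟩ _ ⟨j, rfl⟩ hij
    exact Clopens.coe_disjoint.2 (hW_disj fun h => hij (h ▸ rfl))
  · simpa [← univ_subset_iff] using hW_cover
  · simp only [Finset.mem_image, Finset.mem_univ, true_and, forall_exists_index,
      forall_apply_eq_imp_iff]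
    intro j
    obtain ⟨y, hy⟩ := (hW j).2
    obtain ⟨U, hU, hyU⟩ := mem_sUnion.1 (hcover ▸ mem_univ y)
    exact ⟨U, hU, hy.trans (hO_subset y U hU hyU)⟩
  · intro U hU
    obtain ⟨j, hj⟩ := mem_iUnion.1 (hW_cover (mem_univ (p U hU)))
    obtain ⟨y, hy⟩ := (hW j).2
    exact ⟨W j, Finset.mem_image_of_mem _ (Finset.mem_univ j),
      hy.trans (hO_subset y U hU (hO_marker y U hU (hy hj)))⟩

end Profinite

theorem IsCompact.exists_compact_partition_refining {X : Type*} [TopologicalSpace X] [T2Space X]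
    {T : Set X} (hT : IsCompact T) [TotallyDisconnectedSpace T] {𝒰 : Finset (Set X)}
    (h𝒰 : ∀ U ∈ 𝒰, IsOpen U) (hcover : T ⊆ ⋃₀ ↑𝒰) (hmeet : ∀ U ∈ 𝒰, (T ∩ U).Nonempty) :
    ∃ 𝒦 : Finset (Set X), (∀ K ∈ 𝒦, IsCompact K ∧ K.Nonempty ∧ K ⊆ T) ∧
      (𝒦 : Set (Set X)).Pairwise Disjoint ∧ T ⊆ ⋃₀ ↑𝒦 ∧
      (∀ K ∈ 𝒦, ∃ U ∈ 𝒰, K ⊆ U) ∧ ∀ U ∈ 𝒰, ∃ K ∈ 𝒦, K ⊆ U := by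
  classical
  have := isCompact_iff_compactSpace.1 hT
  obtain ⟨𝒞, h𝒞, h𝒞_disj, h𝒞_cover, h𝒞_sub, h𝒞_sup⟩ :=
    exists_clopen_partition_refining (𝒰 := 𝒰.image (Subtype.val ⁻¹' · : Set X → Set T))
      (Finset.forall_mem_image.2 fun U hU => (h𝒰 U hU).preimage continuous_subtype_val)
      (eq_univ_of_forall fun y => by
        obtain ⟨U, hU, hyU⟩ := hcover y.2
        exact ⟨_, Finset.mem_image_of_mem _ hU, hyU⟩)
      (Finset.forall_mem_image.2 fun U hU =>
        let ⟨x, hxT, hxU⟩ := hmeet U hU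
        ⟨⟨x, hxT⟩, hxU⟩)
  refine ⟨𝒞.image (Subtype.val '' ·), ?_, ?_, ?_, ?_, ?_⟩
  · simp only [Finset.forall_mem_image]
    exact fun C hC => ⟨(h𝒞 C hC).1.isClosed.isCompact.image continuous_subtype_val,
      (h𝒞 C hC).2.image _, Subtype.coe_image_subset _ _⟩
  · rw [Finset.coe_image]
    rintro _ ⟨C, hC, rfl⟩ _ ⟨D, hD, rfl⟩ hCD
    exact disjoint_image_of_injective Subtype.val_injective
      (h𝒞_disj hC hD fun h => hCD (h ▸ rfl))
  · intro x hx
    obtain ⟨C, hC, hxC⟩ := h𝒞_cover.symm ▸ mem_univ (⟨x, hx⟩ : T)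
    exact ⟨_, Finset.mem_image_of_mem _ hC, ⟨x, hx⟩, hxC, rfl⟩
  · simp only [Finset.forall_mem_image]
    intro C hC
    obtain ⟨_, hV, hCV⟩ := h𝒞_sub C hC
    obtain ⟨U, hU, rfl⟩ := Finset.mem_image.1 hV
    exact ⟨U, hU, image_subset_iff.2 hCV⟩
  · intro U hU
    obtain ⟨C, hC, hCU⟩ := h𝒞_sup _ (Finset.mem_image_of_mem _ hU)
    exact ⟨_, Finset.mem_image_of_mem _ hC, image_subset_iff.2 hCU⟩

theorem Set.Finite.t2_separation_of_isCompact {X : Type*} [TopologicalSpace X] [T2Space X]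
    {𝒦 : Set (Set X)} (h𝒦 : 𝒦.Finite) (hc : ∀ K ∈ 𝒦, IsCompact K) (hd : 𝒦.Pairwise Disjoint) :
    ∃ O : Set X → Set X, (∀ K, IsOpen (O K) ∧ K ⊆ O K) ∧ 𝒦.PairwiseDisjoint O :=
  have hd' : 𝒦.PairwiseDisjoint 𝓝ˢ := fun K hK L hL hKL =>
    (SeparatedNhds.of_isCompact_isCompact (hc K hK) (hc L hL) (hd hK hL hKL)).disjoint_nhdsSet
  hd'.exists_mem_filter_basis h𝒦 hasBasis_nhdsSet

namespace CL

variable {X : Type*} [TopologicalSpace X]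

theorem box_inter_box [DecidableEq (Set X)] (𝒰 𝒱 : Finset (Set X)) :
    box 𝒰 ∩ box 𝒱 = box (𝒰.image (· ∩ ⋃₀ ↑𝒱) ∪ 𝒱.image (· ∩ ⋃₀ ↑𝒰)) := by
  have sUnion_image_inter (𝒲 : Finset (Set X)) (S : Set X) :
      ⋃₀ ↑(𝒲.image (· ∩ S)) = ⋃₀ ↑𝒲 ∩ S := by
    rw [Finset.coe_image, sUnion_image, sUnion_eq_biUnion, iUnion₂_inter]
  have inter_of_subset {A S : Set X} (U : Set X) (h : A ⊆ S) : A ∩ (U ∩ S) = A ∩ U := by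
    rw [← inter_assoc, inter_eq_left.2 (inter_subset_left.trans h)]
  ext A
  simp only [box, mem_inter_iff, mem_ofPred_eq, Finset.coe_union, sUnion_union,
    sUnion_image_inter, inter_comm (⋃₀ (𝒱 : Set (Set X))), union_self, subset_inter_iff,
    Finset.forall_mem_union, Finset.forall_mem_image]
  constructor
  · rintro ⟨⟨hA𝒰, h𝒰⟩, hA𝒱, h𝒱⟩
    exact ⟨⟨hA𝒰, hA𝒱⟩, fun U hU => inter_of_subset U hA𝒱 ▸ h𝒰 U hU,
      fun V hV => inter_of_subset V hA𝒰 ▸ h𝒱 V hV⟩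
  · rintro ⟨⟨hA𝒰, hA𝒱⟩, h𝒰, h𝒱⟩
    exact ⟨⟨hA𝒰, fun U hU => inter_of_subset U hA𝒱 ▸ h𝒰 hU⟩,
      hA𝒱, fun V hV => inter_of_subset V hA𝒰 ▸ h𝒱 hV⟩

variable (X) in
theorem isTopologicalBasis_box :
    IsTopologicalBasis {s : Set (CL X) | ∃ 𝒰 : Finset (Set X), (∀ U ∈ 𝒰, IsOpen U) ∧ s = box 𝒰}
    where
  exists_subset_inter := by
    classical
    rintro _ ⟨𝒰, h𝒰, rfl⟩ _ ⟨𝒱, h𝒱, rfl⟩ A hA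
    refine ⟨_, ⟨_, ?_, box_inter_box 𝒰 𝒱⟩, hA, subset_rfl⟩
    simp only [Finset.forall_mem_union, Finset.forall_mem_image]
    exact ⟨fun U hU => (h𝒰 U hU).inter (isOpen_sUnion fun V hV => h𝒱 V hV),
      fun V hV => (h𝒱 V hV).inter (isOpen_sUnion fun U hU => h𝒰 U hU)⟩
  sUnion_eq := by
    refine eq_univ_of_forall fun A => ⟨box {univ}, ⟨{univ}, by simp, rfl⟩, ?_⟩
    simpa [box] using A.nonempty'
  eq_generateFrom := rfl

theorem box_subset_box {𝒰 𝒱 : Finset (Set X)} (h₁ : ∀ V ∈ 𝒱, ∃ U ∈ 𝒰, V ⊆ U)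
    (h₂ : ∀ U ∈ 𝒰, ∃ V ∈ 𝒱, V ⊆ U) : box 𝒱 ⊆ box 𝒰 := by
  rintro A ⟨hA𝒱, hA⟩
  refine ⟨fun x hx => ?_, fun U hU => ?_⟩
  · obtain ⟨V, hV, hxV⟩ := hA𝒱 hx
    obtain ⟨U, hU, hVU⟩ := h₁ V hV
    exact ⟨U, hU, hVU hxV⟩
  · obtain ⟨V, hV, hVU⟩ := h₂ U hU
    exact (hA V hV).mono (inter_subset_inter_right _ hVU)

theorem exists_isCellular_box_subset [T2Space X] {Y : CL X} (hY : IsCompact Y.carrier)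
    [TotallyDisconnectedSpace Y.carrier] {𝒰 : Finset (Set X)}
    (h𝒰 : ∀ U ∈ 𝒰, IsOpen U) (hY𝒰 : Y ∈ box 𝒰) :
    ∃ 𝒱 : Finset (Set X), IsCellular 𝒱 ∧ Y ∈ box 𝒱 ∧ box 𝒱 ⊆ box 𝒰 := by
  classical
  obtain ⟨𝒦, h𝒦, h𝒦_disj, h𝒦_cover, h𝒦_sub, h𝒦_sup⟩ :=
    hY.exists_compact_partition_refining h𝒰 hY𝒰.1 hY𝒰.2
  obtain ⟨O, hO, hO_disj⟩ :=
    𝒦.finite_toSet.t2_separation_of_isCompact (fun K hK => (h𝒦 K hK).1) h𝒦_disj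
  let V : Set X → Set X := fun K => O K ∩ ⋂ U ∈ 𝒰.filter (K ⊆ ·), U
  have hV_open (K : Set X) : IsOpen (V K) :=
    (hO K).1.inter (isOpen_biInter_finset fun U hU => h𝒰 U (Finset.mem_filter.1 hU).1)
  have hKV (K : Set X) : K ⊆ V K :=
    subset_inter (hO K).2 (subset_iInter₂ fun U hU => (Finset.mem_filter.1 hU).2)
  have hVU (K U : Set X) (hU : U ∈ 𝒰) (hKU : K ⊆ U) : V K ⊆ U :=
    inter_subset_right.trans (biInter_subset_of_mem (Finset.mem_filter.2 ⟨hU, hKU⟩))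
  refine ⟨𝒦.image V, ⟨?_, ?_⟩, ⟨?_, ?_⟩, box_subset_box ?_ ?_⟩
  · simp only [Finset.forall_mem_image]
    exact fun K hK => ⟨hV_open K, (h𝒦 K hK).2.1.mono (hKV K)⟩
  · rw [Finset.coe_image]
    rintro _ ⟨K, hK, rfl⟩ _ ⟨L, hL, rfl⟩ hKL
    exact (hO_disj hK hL fun h => hKL (h ▸ rfl)).mono inter_subset_left inter_subset_left
  · intro x hx
    obtain ⟨K, hK, hxK⟩ := h𝒦_cover hx
    exact ⟨V K, Finset.mem_image_of_mem V hK, hKV K hxK⟩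
  · simp only [Finset.forall_mem_image]
    intro K hK
    obtain ⟨x, hx⟩ := (h𝒦 K hK).2.1
    exact ⟨x, (h𝒦 K hK).2.2 hx, hKV K hx⟩
  · simp only [Finset.forall_mem_image]
    intro K hK
    obtain ⟨U, hU, hKU⟩ := h𝒦_sub K hK
    exact ⟨U, hU, hVU K U hU hKU⟩
  · intro U hU
    obtain ⟨K, hK, hKU⟩ := h𝒦_sup U hU
    exact ⟨V K, Finset.mem_image_of_mem V hK, hVU K U hU hKU⟩

end CL

/-- If `Y` is a nonempty, compact, zero-dimensional, closed subset of a Hausdorff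
space `X` (i.e. an element of `CL X` which is compact and whose subspace topology
has a basis of clopen sets), then the family of sets `⟨𝒱⟩` with `𝒱` a finite
cellular family and `Y ∈ ⟨𝒱⟩` is a local base for `CL X` at `Y`. -/
theorem stmt_0 {X : Type*} [TopologicalSpace X] [T2Space X] (Y : CL X)
    (hcomp : IsCompact Y.carrier)
    (hzd : ∀ (y : Y.carrier) (U : Set Y.carrier), IsOpen U → y ∈ U →
      ∃ V : Set Y.carrier, IsClopen V ∧ y ∈ V ∧ V ⊆ U) :
    (nhds Y).HasBasis (fun 𝒱 : Finset (Set X) => IsCellular 𝒱 ∧ Y ∈ CL.box 𝒱)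
      (fun 𝒱 => CL.box 𝒱) := by
  have : TotallySeparatedSpace Y.carrier := totallySeparatedSpace_of_t0_of_basis_clopen <|
    isTopologicalBasis_of_isOpen_of_nhds (fun _ hV => hV.isOpen) fun y U hy hU => hzd y U hU hy
  refine (CL.isTopologicalBasis_box X).nhds_hasBasis.to_hasBasis ?_ ?_
  · rintro _ ⟨⟨𝒰, h𝒰, rfl⟩, hY⟩
    obtain ⟨𝒱, h𝒱, hY𝒱, h𝒱𝒰⟩ := CL.exists_isCellular_box_subset hcomp h𝒰 hY
    exact ⟨𝒱, ⟨h𝒱, hY𝒱⟩, h𝒱𝒰⟩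
  · rintro 𝒱 ⟨h𝒱, hY⟩
    exact ⟨_, ⟨⟨𝒱, fun V hV => (h𝒱.1 V hV).1, rfl⟩, hY⟩, subset_rfl⟩
end

section
/- Let X be a pathwise connected Hausdorff space and let p ∈ X be a point at which X is first countable and locally pathwise connected. If R, S ∈ S_c(X) are such that lim R = p and lim S = p, then there exists a path in S_c(X) from R to S. -/
/-!
Join `R` to `R ∪ S` and `S` to `R ∪ S`. To grow `T` into `T ∪ Q`, enumerate `Q` injectively as
`y₀, y₁, …`; this sequence converges to `p`. First countability and local path connectedness at `p`
give a decreasing neighbourhood basis `W m` of path-connected sets, so `y k` can be joined to `p` by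
a path `γ k` inside `W (m k)` with `m k → ∞`. The paths then shrink uniformly to `p`, and
`t ↦ T ∪ {γ k t | k}` is a path in `S_c(X)`: each of its values converges to `p`, hence is closed
(here the Hausdorff property is used), and continuity in the Vietoris topology holds because only
finitely many `γ k` ever leave a given neighbourhood of `p`.
-/

open Set Topology

open Filter unitInterval

section

variable {X : Type*} [TopologicalSpace X]

theorem CL.ext {A B : CL X} (h : A.carrier = B.carrier) : A = B := by
  cases A; cases B; simpa using h

theorem CL.continuous_of_isOpen {Y : Type*} [TopologicalSpace Y] {f : Y → CL X}
    (hupper : ∀ O, IsOpen O → IsOpen {y | (f y).carrier ⊆ O})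
    (hlower : ∀ U, IsOpen U → IsOpen {y | ((f y).carrier ∩ U).Nonempty}) : Continuous f := by
  refine continuous_generateFrom_iff.2 ?_
  rintro _ ⟨𝒰, h𝒰, rfl⟩
  have hbox : f ⁻¹' CL.box 𝒰 =
      {y | (f y).carrier ⊆ ⋃₀ 𝒰} ∩ ⋂ U ∈ 𝒰, {y | ((f y).carrier ∩ U).Nonempty} := by
    ext; simp [CL.box]
  rw [hbox]
  exact (hupper _ (isOpen_sUnion fun U hU => h𝒰 U hU)).inter
    (isOpen_biInter_finset fun U hU => hlower U (h𝒰 U hU))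

theorem IsLimitOf.isClosed [T2Space X] {S : Set X} {p : X} (h : IsLimitOf S p) :
    IsClosed S := by
  refine isOpen_compl_iff.1 (isOpen_iff_mem_nhds.2 fun x hx => ?_)
  have hxp : x ≠ p := fun hxp => hx (hxp ▸ h.1)
  obtain ⟨U, W, hU, hW, hxU, hpW, hUW⟩ := t2_separation hxp
  filter_upwards [hU.mem_nhds hxU,
    (h.2 W hW hpW).isClosed.isOpen_compl.mem_nhds fun hx' => hx hx'.1] with z hzU hz hzS
  exact hz ⟨hzS, fun hzW => disjoint_left.1 hUW hzU hzW⟩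

def IsLimitOf.toCL [T2Space X] {S : Set X} {p : X} (h : IsLimitOf S p) : CL X :=
  ⟨S, h.isClosed, ⟨p, h.1⟩⟩

theorem IsLimitOf.union_right {S E : Set X} {p : X} (hS : IsLimitOf S p)
    (hE : ∀ U, IsOpen U → p ∈ U → (E \ U).Finite) : IsLimitOf (S ∪ E) p :=
  ⟨Or.inl hS.1, fun U hU hpU => by
    rw [union_sdiff_distrib]; exact (hS.2 U hU hpU).union (hE U hU hpU)⟩

theorem IsLimitOf.tendsto_of_injective {S : Set X} {p : X} (h : IsLimitOf S p) {y : ℕ → X}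
    (hy : Function.Injective y) (hyS : ∀ k, y k ∈ S) : Tendsto y atTop (𝓝 p) := by
  rw [(nhds_basis_opens p).tendsto_right_iff]
  rintro U ⟨hpU, hU⟩
  rw [← Nat.cofinite_eq_atTop, eventually_cofinite]
  exact ((h.2 U hU hpU).preimage hy.injOn).subset fun k hk => ⟨hyS k, hk⟩

theorem Set.Infinite.exists_nat_injective_range_eq {α : Type*} {s : Set α} (hs : s.Infinite)
    (hc : s.Countable) : ∃ y : ℕ → α, Function.Injective y ∧ range y = s := by
  have := hc.to_subtype
  have := hs.to_subtype
  obtain ⟨_⟩ := nonempty_denumerable s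
  let e : ℕ ≃ s := (Denumerable.eqv s).symm
  exact ⟨(↑) ∘ e, Subtype.val_injective.comp e.injective,
    by rw [e.surjective.range_comp, Subtype.range_coe]⟩

theorem exists_antitone_basis_isPathConnected {p : X} [(𝓝 p).IsCountablyGenerated]
    (h : ∀ U ∈ 𝓝 p, ∃ V ∈ 𝓝 p, V ⊆ U ∧ IsPathConnected V) :
    ∃ W : ℕ → Set X, (𝓝 p).HasAntitoneBasis W ∧ ∀ m, IsPathConnected (W m) := by
  obtain ⟨W, hWpc, hW⟩ := ((𝓝 p).basis_sets.restrict (q := IsPathConnected) fun U hU => by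
    obtain ⟨V, hV, hVU, hVpc⟩ := h U hU; exact ⟨V, hV, hVpc, hVU⟩).exists_antitone_subbasis
  exact ⟨W, hW, fun m => (hWpc m).2⟩

/-- The path `γ k` runs inside `W (m k)`, where `m k ≤ k` is the largest index with
`y k ∈ W (m k)`. -/
theorem Filter.HasAntitoneBasis.exists_paths_tendsto_smallSets {p : X} {W : ℕ → Set X}
    (hW : (𝓝 p).HasAntitoneBasis W) (hWpc : ∀ m, IsPathConnected (W m)) {y : ℕ → X}
    (hy : Tendsto y atTop (𝓝 p)) (hjoin : ∀ k, Joined p (y k)) :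
    ∃ γ : ∀ k, Path p (y k), Tendsto (fun k => range (γ k)) atTop (𝓝 p).smallSets := by
  classical
  let m : ℕ → ℕ := fun k => Nat.findGreatest (fun m => y k ∈ W m) k
  have hpath : ∀ k, ∃ γ : Path p (y k), y k ∈ W (m k) → range γ ⊆ W (m k) := by
    intro k
    by_cases hk : y k ∈ W (m k)
    · obtain ⟨γ, hγ⟩ := (hWpc _).joinedIn p (mem_of_mem_nhds (hW.mem _)) (y k) hk
      exact ⟨γ, fun _ => range_subset_iff.2 hγ⟩
    · exact ⟨(hjoin k).somePath, fun h => absurd h hk⟩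
  choose γ hγ using hpath
  refine ⟨γ, tendsto_smallSets_iff.2 fun U hU => ?_⟩
  obtain ⟨M, hM⟩ := hW.mem_iff.1 hU
  filter_upwards [hy (hW.mem M), eventually_ge_atTop M] with k hyk hk
  exact (hγ k (Nat.findGreatest_spec (P := fun m => y k ∈ W m) hk hyk)).trans
    ((hW.antitone (Nat.le_findGreatest hk hyk)).trans hM)

section Sweep

variable {Y : Type*} {γ : ℕ → Y → X} {p : X}

theorem finite_range_eval_diff_of_tendsto_smallSets
    (hγ : Tendsto (fun k => range (γ k)) atTop (𝓝 p).smallSets) (y : Y) {U : Set X}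
    (hU : U ∈ 𝓝 p) : ((range fun k => γ k y) \ U).Finite := by
  obtain ⟨K, hK⟩ := eventually_atTop.1 (tendsto_smallSets_iff.1 hγ U hU)
  refine ((finite_Iio K).image fun k => γ k y).subset ?_
  rintro _ ⟨⟨k, rfl⟩, hk⟩
  exact ⟨k, lt_of_not_ge fun hKk => hk (hK k hKk (mem_range_self y)), rfl⟩

theorem continuous_of_carrier_eq_union_range [TopologicalSpace Y] {T : Set X} (hpT : p ∈ T)
    (hγc : ∀ k, Continuous (γ k))
    (hγ : Tendsto (fun k => range (γ k)) atTop (𝓝 p).smallSets) {f : Y → CL X}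
    (hf : ∀ y, (f y).carrier = T ∪ range fun k => γ k y) : Continuous f := by
  refine CL.continuous_of_isOpen (fun O hO => ?_) (fun U hU => ?_)
  · by_cases hTO : T ⊆ O
    · obtain ⟨K, hK⟩ :=
        eventually_atTop.1 (tendsto_smallSets_iff.1 hγ O (hO.mem_nhds (hTO hpT)))
      have hupper : {y | (f y).carrier ⊆ O} = ⋂ k ∈ Iio K, γ k ⁻¹' O := by
        ext y
        simp only [hf, union_subset_iff, hTO, true_and, range_subset_iff, mem_ofPred_eq,
          mem_iInter, mem_preimage, mem_Iio]
        exact ⟨fun h k _ => h k,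
          fun h k => if hk : k < K then h k hk else hK k (not_lt.1 hk) (mem_range_self y)⟩
      rw [hupper]
      exact (finite_Iio K).isOpen_biInter fun k _ => hO.preimage (hγc k)
    · convert isOpen_empty
      ext y
      simp [hf, hTO]
  · have hlower : {y | ((f y).carrier ∩ U).Nonempty} =
        {_y | (T ∩ U).Nonempty} ∪ ⋃ k, γ k ⁻¹' U := by
      ext y
      simp [hf, union_inter_distrib_right, inter_nonempty]
    rw [hlower]
    exact isOpen_const.union (isOpen_iUnion fun k => hU.preimage (hγc k))

end Sweep

theorem joinedIn_Sc_of_paths [T2Space X] {p : X} {T A : CL X} (hT : T ∈ Sc X)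
    (hTp : IsLimitOf T.carrier p) {y : ℕ → X} (γ : ∀ k, Path p (y k))
    (hγ : Tendsto (fun k => range (γ k)) atTop (𝓝 p).smallSets)
    (hA : A.carrier = T.carrier ∪ range y) : JoinedIn (Sc X) T A := by
  have hlim : ∀ t : I, IsLimitOf (T.carrier ∪ range fun k => γ k t) p := fun t =>
    hTp.union_right fun U hU hpU =>
      finite_range_eval_diff_of_tendsto_smallSets hγ t (hU.mem_nhds hpU)
  let F : I → CL X := fun t => (hlim t).toCL
  have hF0 : F 0 = T := CL.ext (by simp [F, IsLimitOf.toCL, hTp.1])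
  have hF1 : F 1 = A := CL.ext (by simp [F, IsLimitOf.toCL, hA])
  exact ⟨⟨⟨F, continuous_of_carrier_eq_union_range hTp.1 (fun k => (γ k).continuous) hγ
    fun _ => rfl⟩, hF0, hF1⟩, fun t => ⟨hT.1.union (countable_range _),
      hT.2.1.mono subset_union_left, p, hlim t⟩⟩

theorem joinedIn_Sc_union [T2Space X] [PathConnectedSpace X] {p : X} {W : ℕ → Set X}
    (hW : (𝓝 p).HasAntitoneBasis W) (hWpc : ∀ m, IsPathConnected (W m)) {T Q A : CL X}
    (hT : T ∈ Sc X) (hTp : IsLimitOf T.carrier p) (hQ : Q ∈ Sc X) (hQp : IsLimitOf Q.carrier p)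
    (hA : A.carrier = T.carrier ∪ Q.carrier) : JoinedIn (Sc X) T A := by
  obtain ⟨y, hy, hyQ⟩ := hQ.2.1.exists_nat_injective_range_eq hQ.1
  obtain ⟨γ, hγ⟩ := hW.exists_paths_tendsto_smallSets hWpc
    (hQp.tendsto_of_injective hy fun k => hyQ ▸ mem_range_self k)
    fun k => PathConnectedSpace.joined p (y k)
  exact joinedIn_Sc_of_paths hT hTp γ hγ (hyQ ▸ hA)

end

/-- Let `X` be a pathwise connected Hausdorff space and `p ∈ X` a point at which `X`
is first countable and locally pathwise connected (i.e. `p` has a neighborhood basis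
of pathwise connected sets).  If `R, S ∈ S_c(X)` both have limit `p`, then there is a
path in `S_c(X)` from `R` to `S`. -/
theorem stmt_3 {X : Type*} [TopologicalSpace X] [T2Space X] [PathConnectedSpace X]
    (p : X) (hfc : (nhds p).IsCountablyGenerated)
    (hlpc : ∀ U ∈ nhds p, ∃ V ∈ nhds p, V ⊆ U ∧ IsPathConnected V)
    (R S : CL X) (hR : R ∈ Sc X) (hS : S ∈ Sc X)
    (hRp : IsLimitOf R.carrier p) (hSp : IsLimitOf S.carrier p) :
    JoinedIn (Sc X) R S := by
  obtain ⟨W, hW, hWpc⟩ := exists_antitone_basis_isPathConnected hlpc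
  let RS : CL X := ⟨R.carrier ∪ S.carrier, R.isClosed'.union S.isClosed',
    R.nonempty'.mono subset_union_left⟩
  exact (joinedIn_Sc_union hW hWpc hR hRp hS hSp rfl).trans
    (joinedIn_Sc_union (A := RS) hW hWpc hS hSp hR hRp (union_comm _ _)).symm
end

section
/- Let X be a metric space. If 𝒜 ⊆ C(X) has property S uniformly and 𝒟 is a strong refinement of 𝒜, then 𝒟 has property S uniformly. -/
open Set Topology

/-- The family `C(X)` of nonempty compact connected subsets of a metric space `X`. -/
def compactConnectedSets (X : Type*) [MetricSpace X] : Set (Set X) :=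
  {A | IsCompact A ∧ IsConnected A}

/-- For `ε > 0`, membership in `C_ε(X)`: a nonempty compact connected set of
diameter `< ε`. -/
def MemCEps {X : Type*} [MetricSpace X] (ε : ℝ) (B : Set X) : Prop :=
  IsCompact B ∧ IsConnected B ∧ Metric.diam B < ε

/-- A family `𝒜` of subsets of a metric space `X` has *property S uniformly* (PSU):
for every `ε > 0` there exists `k ∈ ℕ` such that every `A ∈ 𝒜` is the union of a
family of at most `k` members of `C_ε(X)`. -/
def HasPSU {X : Type*} [MetricSpace X] (𝒜 : Set (Set X)) : Prop :=
  ∀ ε : ℝ, 0 < ε → ∃ k : ℕ, ∀ A ∈ 𝒜, ∃ ℬ : Finset (Set X), ℬ.card ≤ k ∧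
    (∀ B ∈ ℬ, MemCEps ε B) ∧ A = ⋃₀ (ℬ : Set (Set X))

/-! The traces `D ∩ B` of an `ε`-cover `ℬ` of `A ⊇ D` cover `D`; they are no more numerous
than `ℬ`, still have diameter `< ε`, and the strong refinement hypothesis says precisely that
the nonempty ones are connected. -/

theorem Finset.exists_inter_cover_of_subset_sUnion {α : Type*} {ℬ : Finset (Set α)} {D : Set α}
    (hD : D ⊆ ⋃₀ (ℬ : Set (Set α))) :
    ∃ ℬ' : Finset (Set α), ℬ'.card ≤ ℬ.card ∧
      (∀ C ∈ ℬ', ∃ B ∈ ℬ, (D ∩ B).Nonempty ∧ C = D ∩ B) ∧ D = ⋃₀ (ℬ' : Set (Set α)) := by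
  classical
  refine ⟨(ℬ.filter fun B => (D ∩ B).Nonempty).image (D ∩ ·),
    Finset.card_image_le.trans (Finset.card_filter_le _ _), ?_, ?_⟩
  · simp only [Finset.mem_image, Finset.mem_filter]
    rintro C ⟨B, ⟨hB, hne⟩, rfl⟩
    exact ⟨B, hB, hne, rfl⟩
  · refine Set.Subset.antisymm (fun x hx => ?_) ?_
    · obtain ⟨B, hB, hxB⟩ := hD hx
      exact ⟨D ∩ B, by simpa using ⟨B, ⟨hB, x, hx, hxB⟩, rfl⟩, hx, hxB⟩
    · rw [Finset.coe_image]
      exact sUnion_subset (Set.forall_mem_image.2 fun _ _ => Set.inter_subset_left)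

theorem MemCEps.inter_left {X : Type*} [MetricSpace X] {ε : ℝ} {B D : Set X}
    (hB : MemCEps ε B) (hD : IsCompact D) (hconn : IsConnected (D ∩ B)) :
    MemCEps ε (D ∩ B) :=
  ⟨hD.inter hB.1, hconn,
    (Metric.diam_mono inter_subset_right hB.1.isBounded).trans_lt hB.2.2⟩

theorem stmt_5_general {X : Type*} [MetricSpace X] (𝒜 𝒟 : Set (Set X))
    (h𝒟 : 𝒟 ⊆ compactConnectedSets X)
    (hPSU : HasPSU 𝒜)
    (href : ∀ D ∈ 𝒟, ∃ A ∈ 𝒜, D ⊆ A)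
    (hstrong : ∀ D ∈ 𝒟, ∀ A ∈ 𝒜, D ⊆ A → ∀ B ⊆ A, IsCompact B → IsConnected B →
      D ∩ B = ∅ ∨ IsConnected (D ∩ B)) :
    HasPSU 𝒟 := by
  intro ε hε
  obtain ⟨k, hk⟩ := hPSU ε hε
  refine ⟨k, fun D hD => ?_⟩
  obtain ⟨A, hA, hDA⟩ := href D hD
  obtain ⟨ℬ, hcard, hmem, rfl⟩ := hk A hA
  obtain ⟨ℬ', hcard', htrace, hcover⟩ := Finset.exists_inter_cover_of_subset_sUnion hDA
  refine ⟨ℬ', hcard'.trans hcard, fun C hC => ?_, hcover⟩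
  obtain ⟨B, hB, hne, rfl⟩ := htrace C hC
  have hconn : IsConnected (D ∩ B) :=
    (hstrong D hD _ hA hDA B (subset_sUnion_of_mem hB) (hmem B hB).1 (hmem B hB).2.1).resolve_left
      hne.ne_empty
  exact (hmem B hB).inter_left (h𝒟 hD).1 hconn

/-- Let `X` be a metric space.  If `𝒜 ⊆ C(X)` has property S uniformly and `𝒟 ⊆ C(X)`
is a strong refinement of `𝒜`, then `𝒟` has property S uniformly. -/
theorem stmt_5 {X : Type*} [MetricSpace X] (𝒜 𝒟 : Set (Set X))
    (h𝒜 : 𝒜 ⊆ compactConnectedSets X) (h𝒟 : 𝒟 ⊆ compactConnectedSets X)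
    (hPSU : HasPSU 𝒜)
    (href : ∀ D ∈ 𝒟, ∃ A ∈ 𝒜, D ⊆ A)
    (hstrong : ∀ D ∈ 𝒟, ∀ A ∈ 𝒜, D ⊆ A → ∀ B ⊆ A, IsCompact B → IsConnected B →
      D ∩ B = ∅ ∨ IsConnected (D ∩ B)) :
    HasPSU 𝒟 :=
  stmt_5_general 𝒜 𝒟 h𝒟 hPSU href hstrong
end

section
/- Let X be a metric space and let ℋ(X) be a nonempty subset of K(X) each of whose elements is zero-dimensional, viewed as a subspace of CL(X). Suppose f : [0,1] → ℋ(X) is a path and that for each x ∈ f(0) there is a path g_x : [0,1] → X with g_x(0) = x and g_x(t) ∈ f(t) for every t ∈ [0,1]. Then the family {g_x[[0,1]] : x ∈ f(0)} has property S uniformly. -/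
open Set Topology

/-!
Each `f τ` is compact and zero-dimensional, so it splits into finitely many small clopen
pieces; slightly thickening them gives pairwise disjoint small open sets whose union `W τ`
contains `f τ`, and a preconnected subset of `W τ` lies in one of them. By Vietoris continuity
`f s ⊆ W τ` for `s` near `τ`, so a Lebesgue-number partition `0 = t₀ ≤ t₁ ≤ ⋯ ≤ tₙ₊₁ = 1`,
chosen before `x`, cuts every path `g x` into `n + 1` arcs `g x '' [tₖ, tₖ₊₁]`, each a continuum
of small diameter.
-/

open Metric Filter Function TopologicalSpace

theorem Disjoint.eventually_disjoint_thickening {X : Type*} [PseudoMetricSpace X]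
    {s t : Set X} (hst : Disjoint s t) (hs : IsCompact s) (ht : IsClosed t) :
    ∀ᶠ δ in 𝓝[>] 0, Disjoint (thickening δ s) (thickening δ t) := by
  obtain ⟨δ₀, hδ₀, hdisj⟩ := hst.exists_thickenings hs ht
  filter_upwards [Ioo_mem_nhdsGT hδ₀] with δ hδ
  exact hdisj.mono (thickening_mono hδ.2.le _) (thickening_mono hδ.2.le _)

theorem eventually_pairwise_disjoint_thickening {ι X : Type*} [Finite ι] [MetricSpace X]
    {K : ι → Set X} (hK : ∀ i, IsCompact (K i)) (hd : Pairwise (Disjoint on K)) :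
    ∀ᶠ δ in 𝓝[>] 0, Pairwise (Disjoint on fun i => thickening δ (K i)) := by
  simp only [Pairwise, eventually_all]
  intro i j hij
  exact (hd hij).eventually_disjoint_thickening (hK i) (hK j).isClosed

theorem IsPreconnected.exists_subset_of_pairwise_disjoint {α ι : Type*} [TopologicalSpace α]
    {s : Set α} {U : ι → Set α} (hs : IsPreconnected s) (hsne : s.Nonempty)
    (hU : ∀ i, IsOpen (U i)) (hd : Pairwise (Disjoint on U)) (hsU : s ⊆ ⋃ i, U i) :
    ∃ i, s ⊆ U i := by
  obtain ⟨x, hx⟩ := hsne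
  obtain ⟨i, hxi⟩ := mem_iUnion.1 (hsU hx)
  refine ⟨i, hs.subset_left_of_subset_union (hU i) (isOpen_biUnion fun j _ => hU j)
    (disjoint_iUnion₂_right.2 fun j hji => hd (Ne.symm hji)) (fun y hy => ?_) ⟨x, hx, hxi⟩⟩
  obtain ⟨j, hyj⟩ := mem_iUnion.1 (hsU hy)
  by_cases hji : j = i
  · exact Or.inl (hji ▸ hyj)
  · exact Or.inr (mem_biUnion hji hyj)

theorem IsCompact.exists_pairwise_disjoint_isCompact_cover_diam_le {X : Type*}
    [MetricSpace X] {s : Set X} (hs : IsCompact s) [TotallyDisconnectedSpace s] {ε : ℝ}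
    (hε : 0 < ε) :
    ∃ (n : ℕ) (K : Fin n → Set X), (∀ i, IsCompact (K i)) ∧ Pairwise (Disjoint on K) ∧
      (∀ i, diam (K i) ≤ ε) ∧ s ⊆ ⋃ i, K i := by
  have : CompactSpace s := isCompact_iff_compactSpace.mp hs
  have hS : {p : X × X | dist p.1 p.2 < ε} ∈ 𝓝ˢ (diagonal X) :=
    nhdsSet_diagonal_le_uniformity (dist_mem_uniformity hε)
  obtain ⟨n, D, -, hDsmall, hDcover, hDdisj⟩ :=
    (ContinuousMap.mk ((↑) : s → X) continuous_subtype_val)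
      |>.exists_disjoint_nonempty_clopen_cover_of_mem_nhds_diagonal hS
  refine ⟨n, fun i => (↑) '' (D i : Set s),
    fun i => (D i).isClopen.isClosed.isCompact.image continuous_subtype_val,
    fun i j hij => disjoint_image_of_injective Subtype.val_injective
      (Clopens.coe_disjoint.2 (hDdisj hij)),
    fun i => diam_le_of_forall_dist_le hε.le ?_, ?_⟩
  · rintro _ ⟨a, ha, rfl⟩ _ ⟨b, hb, rfl⟩
    exact (hDsmall i a ha b hb).le
  · intro x hx
    obtain ⟨i, hi⟩ := mem_iUnion.1 (hDcover (mem_univ ⟨x, hx⟩))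
    exact mem_iUnion.2 ⟨i, ⟨x, hx⟩, hi, rfl⟩

theorem IsCompact.exists_isOpen_superset_diam_le_of_isPreconnected {X : Type*} [MetricSpace X]
    {s : Set X} (hs : IsCompact s) [TotallyDisconnectedSpace s] {ε : ℝ} (hε : 0 < ε) :
    ∃ W, IsOpen W ∧ s ⊆ W ∧ ∀ S ⊆ W, IsPreconnected S → diam S ≤ ε := by
  obtain ⟨n, K, hKc, hKd, hKdiam, hsK⟩ :=
    hs.exists_pairwise_disjoint_isCompact_cover_diam_le (half_pos hε)
  obtain ⟨δ, hδ, hδpos⟩ := ((eventually_pairwise_disjoint_thickening hKc hKd).and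
    (Ioo_mem_nhdsGT (by positivity : 0 < ε / 4))).exists
  refine ⟨⋃ i, thickening δ (K i), isOpen_iUnion fun _ => isOpen_thickening,
    hsK.trans (iUnion_mono fun i => self_subset_thickening hδpos.1 _), fun S hSW hS => ?_⟩
  rcases S.eq_empty_or_nonempty with rfl | hSne
  · simp [hε.le]
  obtain ⟨i, hSi⟩ :=
    hS.exists_subset_of_pairwise_disjoint hSne (fun _ => isOpen_thickening) hδ hSW
  calc diam S ≤ diam (thickening δ (K i)) := diam_mono hSi (hKc i).isBounded.thickening
    _ ≤ diam (K i) + 2 * δ := diam_thickening_le _ hδpos.1.le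
    _ ≤ ε := by linarith [hKdiam i, hδpos.2]

theorem totallyDisconnectedSpace_of_forall_exists_isClopen {α : Type*} [TopologicalSpace α]
    [T0Space α] (h : ∀ (y : α) (U : Set α), IsOpen U → y ∈ U → ∃ V, IsClopen V ∧ y ∈ V ∧ V ⊆ U) :
    TotallyDisconnectedSpace α := by
  have : TotallySeparatedSpace α := totallySeparatedSpace_of_t0_of_basis_clopen <|
    isTopologicalBasis_of_isOpen_of_nhds (fun _ hu => hu.isOpen) fun a u ha hu => h a u hu ha
  infer_instance

theorem exists_le_mem_Icc_of_mem_Icc {α : Type*} [LinearOrder α] {t : ℕ → α} {x : α} :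
    ∀ {n : ℕ}, x ∈ Icc (t 0) (t (n + 1)) → ∃ k ≤ n, x ∈ Icc (t k) (t (k + 1))
  | 0, hx => ⟨0, le_rfl, hx⟩
  | n + 1, hx => by
    by_cases hxn : x ≤ t (n + 1)
    · obtain ⟨k, hk, hxk⟩ := exists_le_mem_Icc_of_mem_Icc (n := n) ⟨hx.1, hxn⟩
      exact ⟨k, hk.trans n.le_succ, hxk⟩
    · exact ⟨n + 1, le_rfl, (not_le.1 hxn).le, hx.2⟩

theorem unitInterval.range_eq_sUnion_image_Icc {Y : Type*} (γ : unitInterval → Y)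
    {t : ℕ → unitInterval} {n : ℕ} (ht0 : t 0 = 0) (htn : t (n + 1) = 1) :
    range γ = ⋃₀ ↑((Finset.range (n + 1)).image fun k => γ '' Icc (t k) (t (k + 1))) := by
  ext y
  simp only [Finset.coe_image, Finset.coe_range, sUnion_image, mem_iUnion, mem_Iio, mem_range]
  constructor
  · rintro ⟨s, rfl⟩
    obtain ⟨k, hk, hsk⟩ := exists_le_mem_Icc_of_mem_Icc (t := t) (x := s) (n := n) <| by
      rw [ht0, htn]
      exact ⟨nonneg', le_one'⟩
    exact ⟨k, Nat.lt_succ_of_le hk, s, hsk, rfl⟩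
  · rintro ⟨k, -, s, -, rfl⟩
    exact ⟨s, rfl⟩

theorem CL.isOpen_setOf_carrier_subset {X : Type*} [TopologicalSpace X] {W : Set X}
    (hW : IsOpen W) : IsOpen {A : CL X | A.carrier ⊆ W} := by
  have hbox : {A : CL X | A.carrier ⊆ W} = CL.box {W} := by
    ext A
    simp only [CL.box, mem_ofPred_eq, Finset.coe_singleton, sUnion_singleton,
      Finset.mem_singleton, forall_eq, iff_self_and]
    exact fun h => (inter_eq_left.2 h).symm ▸ A.nonempty'
  rw [hbox]
  exact isOpen_generateFrom_of_mem ⟨{W}, by simp [hW], rfl⟩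

theorem stmt_6_general {X : Type*} [MetricSpace X] (ℋ : Set (CL X))
    (hK : ∀ A ∈ ℋ, IsCompact A.carrier)
    (hzd : ∀ A ∈ ℋ, ∀ (y : A.carrier) (U : Set A.carrier), IsOpen U → y ∈ U →
      ∃ V : Set A.carrier, IsClopen V ∧ y ∈ V ∧ V ⊆ U)
    (f : C(unitInterval, CL X)) (hf : ∀ t, f t ∈ ℋ)
    (g : X → C(unitInterval, X))
    (hgmem : ∀ x ∈ (f 0).carrier, ∀ t, g x t ∈ (f t).carrier) :
    HasPSU {S | ∃ x ∈ (f 0).carrier, S = Set.range (g x)} := by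
  intro ε hε
  have hW τ :
      ∃ W, IsOpen W ∧ (f τ).carrier ⊆ W ∧ ∀ S ⊆ W, IsPreconnected S → diam S ≤ ε / 2 :=
    have := totallyDisconnectedSpace_of_forall_exists_isClopen (hzd _ (hf τ))
    (hK _ (hf τ)).exists_isOpen_superset_diam_le_of_isPreconnected (half_pos hε)
  choose W hWo hfW hWdiam using hW
  obtain ⟨t, ht0, htmono, ⟨n, htn⟩, htW⟩ := exists_monotone_Icc_subset_open_cover_unitInterval
    (c := fun τ => f ⁻¹' {A | A.carrier ⊆ W τ})
    (fun τ => (CL.isOpen_setOf_carrier_subset (hWo τ)).preimage f.continuous)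
    (fun τ _ => mem_iUnion.2 ⟨τ, hfW τ⟩)
  refine ⟨n + 1, ?_⟩
  rintro _ ⟨x, hx, rfl⟩
  refine ⟨(Finset.range (n + 1)).image fun k => g x '' Icc (t k) (t (k + 1)),
    Finset.card_image_le.trans (Finset.card_range _).le, ?_, ?_⟩
  · simp only [Finset.mem_image]
    rintro _ ⟨k, -, rfl⟩
    obtain ⟨τ, hτ⟩ := htW k
    have hpre : IsPreconnected (g x '' Icc (t k) (t (k + 1))) :=
      isPreconnected_Icc.image _ (g x).continuous.continuousOn
    refine ⟨isCompact_Icc.image (g x).continuous,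
      ⟨(nonempty_Icc.2 (htmono k.le_succ)).image _, hpre⟩, ?_⟩
    have := hWdiam τ _ (image_subset_iff.2 fun s hs => hτ hs (hgmem x hx s)) hpre
    linarith
  · exact unitInterval.range_eq_sUnion_image_Icc _ ht0 (htn (n + 1) n.le_succ)

/-- Let `X` be a metric space and `ℋ(X)` a nonempty subset of `K(X)` (compact elements
of `CL X`) each of whose elements is zero-dimensional.  Suppose `f : [0,1] → ℋ(X)` is
a path and for each `x ∈ f 0` there is a path `g x : [0,1] → X` with `g x 0 = x` and
`g x t ∈ f t` for all `t`.  Then the family `{(g x)[[0,1]] : x ∈ f 0}` has property S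
uniformly. -/
theorem stmt_6 {X : Type*} [MetricSpace X] (ℋ : Set (CL X)) (hne : ℋ.Nonempty)
    (hK : ∀ A ∈ ℋ, IsCompact A.carrier)
    (hzd : ∀ A ∈ ℋ, ∀ (y : A.carrier) (U : Set A.carrier), IsOpen U → y ∈ U →
      ∃ V : Set A.carrier, IsClopen V ∧ y ∈ V ∧ V ⊆ U)
    (f : C(unitInterval, CL X)) (hf : ∀ t, f t ∈ ℋ)
    (g : X → C(unitInterval, X))
    (hg0 : ∀ x ∈ (f 0).carrier, g x 0 = x)
    (hgmem : ∀ x ∈ (f 0).carrier, ∀ t, g x t ∈ (f t).carrier) :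
    HasPSU {S | ∃ x ∈ (f 0).carrier, S = Set.range (g x)} :=
  stmt_6_general ℋ hK hzd f hf g hgmem
end

section
/- Let X be a first countable Hausdorff space. If X is locally pathwise connected, then S_c(X) is locally pathwise connected. -/
open Set Topology

namespace HyperAux

variable {X : Type*} [TopologicalSpace X]

lemma CL.ext' {A B : CL X} (h : A.carrier = B.carrier) : A = B := by
  cases A; cases B; simpa using h

lemma isOpen_box {𝒰 : Finset (Set X)} (h : ∀ U ∈ 𝒰, IsOpen U) : IsOpen (CL.box 𝒰) :=
  TopologicalSpace.isOpen_generateFrom_of_mem ⟨𝒰, h, rfl⟩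

lemma continuous_into_CL {Y : Type*} [TopologicalSpace Y] {c : Y → CL X}
    (h1 : ∀ U : Set X, IsOpen U → IsOpen {t | (c t).carrier ⊆ U})
    (h2 : ∀ U : Set X, IsOpen U → IsOpen {t | ((c t).carrier ∩ U).Nonempty}) :
    Continuous c := by
  apply continuous_generateFrom_iff.mpr
  rintro s ⟨𝒰, hop, rfl⟩
  have he : c ⁻¹' CL.box 𝒰 =
      {t | (c t).carrier ⊆ ⋃₀ (𝒰 : Set (Set X))} ∩
        ⋂ U ∈ 𝒰, {t | ((c t).carrier ∩ U).Nonempty} := by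
    ext t
    simp [CL.box, Set.mem_iInter]
  rw [he]
  exact (h1 _ (isOpen_sUnion (by exact_mod_cast hop))).inter
    (isOpen_biInter_finset fun U hU => h2 U (hop U hU))

/-- upper semicontinuity of a set-valued map -/
def USC (c : ℝ → Set X) : Prop := ∀ U : Set X, IsOpen U → IsOpen {t | c t ⊆ U}

/-- lower semicontinuity -/
def LSC (c : ℝ → Set X) : Prop := ∀ U : Set X, IsOpen U → IsOpen {t | (c t ∩ U).Nonempty}

lemma USC.union {c d : ℝ → Set X} (hc : USC c) (hd : USC d) :
    USC (fun t => c t ∪ d t) := by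
  intro U hU
  have : {t | c t ∪ d t ⊆ U} = {t | c t ⊆ U} ∩ {t | d t ⊆ U} := by
    ext t; simp [union_subset_iff]
  rw [this]; exact (hc U hU).inter (hd U hU)

lemma LSC.union {c d : ℝ → Set X} (hc : LSC c) (hd : LSC d) :
    LSC (fun t => c t ∪ d t) := by
  intro U hU
  have : {t | ((c t ∪ d t) ∩ U).Nonempty} =
      {t | (c t ∩ U).Nonempty} ∪ {t | (d t ∩ U).Nonempty} := by
    ext t
    simp [union_inter_distrib_right, union_nonempty]
  rw [this]; exact (hc U hU).union (hd U hU)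

lemma USC.point {g : ℝ → X} (hg : Continuous g) : USC (fun t => ({g t} : Set X)) := by
  intro U hU
  have : {t | ({g t} : Set X) ⊆ U} = g ⁻¹' U := by ext t; simp
  rw [this]; exact hU.preimage hg

lemma LSC.point {g : ℝ → X} (hg : Continuous g) : LSC (fun t => ({g t} : Set X)) := by
  intro U hU
  have : {t | (({g t} : Set X) ∩ U).Nonempty} = g ⁻¹' U := by
    ext t; simp [singleton_inter_nonempty]
  rw [this]; exact hU.preimage hg

lemma USC.finsetUnion {ι : Type*} (s : Finset ι) (c : ι → ℝ → Set X)
    (h : ∀ i ∈ s, USC (c i)) : USC (fun t => ⋃ i ∈ s, c i t) := by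
  intro U hU
  have : {t | (⋃ i ∈ s, c i t) ⊆ U} = ⋂ i ∈ s, {t | c i t ⊆ U} := by
    ext t; simp [iUnion_subset_iff]
  rw [this]
  exact isOpen_biInter_finset fun i hi => h i hi U hU

lemma LSC.finsetUnion {ι : Type*} (s : Finset ι) (c : ι → ℝ → Set X)
    (h : ∀ i ∈ s, LSC (c i)) : LSC (fun t => ⋃ i ∈ s, c i t) := by
  intro U hU
  have : {t | ((⋃ i ∈ s, c i t) ∩ U).Nonempty} = ⋃ i ∈ s, {t | (c i t ∩ U).Nonempty} := by
    ext t
    simp only [mem_setOf_eq, mem_iUnion, iUnion_inter, nonempty_iUnion]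
  rw [this]
  exact isOpen_biUnion fun i hi => h i hi U hU

lemma USC.congr {c d : ℝ → Set X} (h : USC c) (he : ∀ t, c t = d t) : USC d := by
  intro U hU
  have h2 := h U hU
  have : {t | d t ⊆ U} = {t | c t ⊆ U} := by ext s; simp only [mem_setOf_eq, he s]
  rw [this]; exact h2

lemma LSC.congr {c d : ℝ → Set X} (h : LSC c) (he : ∀ t, c t = d t) : LSC d := by
  intro U hU
  have h2 := h U hU
  have : {t | (d t ∩ U).Nonempty} = {t | (c t ∩ U).Nonempty} := by
    ext s; simp only [mem_setOf_eq, he s]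
  rw [this]; exact h2

/-- The key "shrinking family" lemma: a sequence of moving points which is locally
uniformly attracted to a moving limit point gives an upper- and lower-semicontinuous
set-valued map, whose values are convergent sequences. -/
lemma family_lemma {f : ℕ → ℝ → X} {l : ℝ → X}
    (hf : ∀ n, Continuous (f n)) (hl : Continuous l)
    (hU : ∀ t₀ : ℝ, ∀ U : Set X, IsOpen U → l t₀ ∈ U →
      ∃ J ∈ 𝓝 t₀, ∃ N, ∀ n, N ≤ n → ∀ t ∈ J, f n t ∈ U ∨ f n t = l t) :
    USC (fun t => insert (l t) (range fun n => f n t)) ∧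
      LSC (fun t => insert (l t) (range fun n => f n t)) ∧
      ∀ t, Filter.Tendsto (fun n => f n t) Filter.atTop (𝓝 (l t)) := by
  refine ⟨?_, ?_, ?_⟩
  · intro U hUo
    rw [isOpen_iff_mem_nhds]
    intro t₀ ht₀
    simp only [mem_setOf_eq, insert_subset_iff, range_subset_iff] at ht₀
    obtain ⟨J, hJ, N, hN⟩ := hU t₀ U hUo ht₀.1
    have h2 : l ⁻¹' U ∈ 𝓝 t₀ := (hUo.preimage hl).mem_nhds ht₀.1
    have h3 : (⋂ n ∈ Finset.range N, (f n) ⁻¹' U) ∈ 𝓝 t₀ := by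
      refine (Filter.biInter_finset_mem _).mpr fun n _ => ?_
      exact ((hUo.preimage (hf n)).mem_nhds (ht₀.2 n))
    filter_upwards [hJ, h2, h3] with t htJ htl htf
    simp only [mem_setOf_eq, insert_subset_iff, range_subset_iff]
    refine ⟨htl, fun n => ?_⟩
    rcases lt_or_ge n N with hn | hn
    · exact mem_iInter₂.mp htf n (Finset.mem_range.mpr hn)
    · rcases hN n hn t htJ with h | h
      · exact h
      · rw [h]; exact htl
  · intro U hUo
    have : {t | (insert (l t) (range fun n => f n t) ∩ U).Nonempty} =
        l ⁻¹' U ∪ ⋃ n, (f n) ⁻¹' U := by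
      ext t
      simp only [mem_setOf_eq, mem_union, mem_preimage]
      constructor
      · rintro ⟨y, hy, hyU⟩
        rcases hy with rfl | ⟨n, rfl⟩
        · exact Or.inl hyU
        · exact Or.inr (mem_iUnion.mpr ⟨n, hyU⟩)
      · rintro (h | h)
        · exact ⟨l t, mem_insert _ _, h⟩
        · obtain ⟨n, hn⟩ := mem_iUnion.mp h
          exact ⟨f n t, mem_insert_of_mem _ ⟨n, rfl⟩, hn⟩
    rw [this]
    exact (hUo.preimage hl).union (isOpen_iUnion fun n => hUo.preimage (hf n))
  · intro t
    rw [Filter.tendsto_atTop']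
    intro s hs
    obtain ⟨U, hUs, hUo, hlU⟩ := mem_nhds_iff.mp hs
    obtain ⟨J, hJ, N, hN⟩ := hU t U hUo hlU
    refine ⟨N, fun n hn => ?_⟩
    rcases hN n hn t (mem_of_mem_nhds hJ) with h | h
    · exact hUs h
    · rw [h]; exact hUs hlU

lemma exists_enum {S : Set X} (hc : S.Countable) (hi : S.Infinite) :
    ∃ e : ℕ → X, Function.Injective e ∧ range e = S := by
  haveI := hc.to_subtype
  haveI := hi.to_subtype
  haveI : Encodable S := Encodable.ofCountable _
  haveI : Denumerable S := Denumerable.ofEncodableOfInfinite _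
  let eqv : ℕ ≃ S := (Denumerable.eqv S).symm
  refine ⟨fun n => (eqv n : X), ?_, ?_⟩
  · exact Subtype.val_injective.comp eqv.injective
  · have : range (fun n => (eqv n : X)) = Subtype.val '' (range eqv) := by
      rw [← range_comp]; rfl
    rw [this, eqv.range_eq_univ, image_univ, Subtype.range_coe]

lemma tendsto_of_limit {S : Set X} {q : X}
    (h : ∀ U : Set X, IsOpen U → q ∈ U → (S \ U).Finite)
    {e : ℕ → X} (he : Function.Injective e) (hr : ∀ n, e n ∈ S) :
    Filter.Tendsto e Filter.atTop (𝓝 q) := by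
  intro s hs
  obtain ⟨U, hUs, hUo, hqU⟩ := mem_nhds_iff.mp hs
  have hfin : {n | e n ∉ U}.Finite := by
    have : {n | e n ∉ U} ⊆ e ⁻¹' (S \ U) := fun n hn => ⟨hr n, hn⟩
    exact ((h U hUo hqU).preimage (he.injOn)).subset this
  have hev : ∀ᶠ n in Filter.cofinite, e n ∈ U := hfin
  rw [Nat.cofinite_eq_atTop] at hev
  exact Filter.mem_of_superset (hev.mono fun n hn => hUs hn) (fun _ h => h)

lemma exists_pc_basis [FirstCountableTopology X] [LocallyPathConnectedSpace X]
    (q : X) (U₀ : Set X) (hU₀ : IsOpen U₀) (hq : q ∈ U₀) :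
    ∃ Q : ℕ → Set X, (∀ j, IsOpen (Q j)) ∧ (∀ j, q ∈ Q j) ∧ (∀ j, IsPathConnected (Q j)) ∧
      Antitone Q ∧ (∀ j, Q j ⊆ U₀) ∧ (∀ U ∈ 𝓝 q, ∃ j, Q j ⊆ U) := by
  obtain ⟨u, hu⟩ := (𝓝 q).exists_antitone_basis
  set O : ℕ → Set X := fun j => U₀ ∩ ⋂ i ∈ Finset.range (j + 1), interior (u i) with hO
  have hOopen : ∀ j, IsOpen (O j) :=
    fun j => hU₀.inter (isOpen_biInter_finset fun i _ => isOpen_interior)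
  have hqO : ∀ j, q ∈ O j := by
    intro j
    refine ⟨hq, mem_iInter₂.mpr fun i _ => ?_⟩
    exact mem_interior_iff_mem_nhds.mpr (hu.toHasBasis.mem_of_mem trivial)
  have hOanti : Antitone O := by
    intro i j hij
    refine inter_subset_inter_right _ ?_
    intro x hx
    refine mem_iInter₂.mpr fun k hk => ?_
    exact mem_iInter₂.mp hx k (Finset.mem_range.mpr ((Finset.mem_range.mp hk).trans_le
      (by omega)))
  refine ⟨fun j => pathComponentIn (O j) q, fun j => (hOopen j).pathComponentIn q,
    fun j => mem_pathComponentIn_self (hqO j),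
    fun j => isPathConnected_pathComponentIn (hqO j), ?_, ?_, ?_⟩
  · intro i j hij
    exact pathComponentIn_mono (hOanti hij)
  · intro j
    exact pathComponentIn_subset.trans inter_subset_left
  · intro U hUq
    obtain ⟨j, -, hj⟩ := hu.toHasBasis.mem_iff.mp hUq
    refine ⟨j, ?_⟩
    refine pathComponentIn_subset.trans ?_
    refine subset_trans ?_ (interior_subset.trans hj)
    exact inter_subset_right.trans (biInter_subset_of_mem (Finset.self_mem_range_succ j))

lemma extend_mem {s : Set X} {y z : X} (h : JoinedIn s y z) (t : ℝ) :
    h.somePath.extend t ∈ s := by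
  have hmem : h.somePath.extend t ∈ range h.somePath := by
    rw [← Path.extend_range]; exact mem_range_self t
  obtain ⟨s', hs'⟩ := hmem
  rw [← hs']; exact h.somePath_mem s'

lemma box_refine {𝒰 𝒱 : Finset (Set X)} {A : CL X}
    (h𝒰 : ∀ U ∈ 𝒰, IsOpen U) (h𝒱 : ∀ U ∈ 𝒱, IsOpen U)
    (hA : A ∈ CL.box 𝒰) (hB : A ∈ CL.box 𝒱) :
    ∃ 𝒲 : Finset (Set X), (∀ U ∈ 𝒲, IsOpen U) ∧ A ∈ CL.box 𝒲 ∧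
      CL.box 𝒲 ⊆ CL.box 𝒰 ∧ CL.box 𝒲 ⊆ CL.box 𝒱 := by
  classical
  set 𝒲 : Finset (Set X) :=
    𝒰.image (fun U => U ∩ ⋃₀ (𝒱 : Set (Set X))) ∪
      𝒱.image (fun V => V ∩ ⋃₀ (𝒰 : Set (Set X))) with h𝒲
  have hmem : ∀ W ∈ 𝒲, (∃ U ∈ 𝒰, W = U ∩ ⋃₀ (𝒱 : Set (Set X))) ∨
      (∃ V ∈ 𝒱, W = V ∩ ⋃₀ (𝒰 : Set (Set X))) := by
    intro W hW
    rw [h𝒲, Finset.mem_union, Finset.mem_image, Finset.mem_image] at hW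
    rcases hW with ⟨U, hU, rfl⟩ | ⟨V, hV, rfl⟩
    · exact Or.inl ⟨U, hU, rfl⟩
    · exact Or.inr ⟨V, hV, rfl⟩
  have hWopen : ∀ W ∈ 𝒲, IsOpen W := by
    intro W hW
    rcases hmem W hW with ⟨U, hU, rfl⟩ | ⟨V, hV, rfl⟩
    · exact (h𝒰 U hU).inter (isOpen_sUnion (by exact_mod_cast h𝒱))
    · exact (h𝒱 V hV).inter (isOpen_sUnion (by exact_mod_cast h𝒰))
  refine ⟨𝒲, hWopen, ⟨?_, ?_⟩, ?_, ?_⟩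
  · intro x hx
    obtain ⟨U, hU, hxU⟩ := hA.1 hx
    refine ⟨U ∩ ⋃₀ (𝒱 : Set (Set X)), ?_, hxU, hB.1 hx⟩
    have : U ∩ ⋃₀ (𝒱 : Set (Set X)) ∈ 𝒲 := by
      rw [h𝒲, Finset.mem_union, Finset.mem_image]
      exact Or.inl ⟨U, by exact_mod_cast hU, rfl⟩
    exact_mod_cast this
  · intro W hW
    rcases hmem W hW with ⟨U, hU, rfl⟩ | ⟨V, hV, rfl⟩
    · obtain ⟨y, hyA, hyU⟩ := hA.2 U hU
      exact ⟨y, hyA, hyU, hB.1 hyA⟩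
    · obtain ⟨y, hyA, hyV⟩ := hB.2 V hV
      exact ⟨y, hyA, hyV, hA.1 hyA⟩
  · rintro B ⟨hB1, hB2⟩
    constructor
    · intro x hx
      obtain ⟨W, hW, hxW⟩ := hB1 hx
      have hW' : W ∈ 𝒲 := by exact_mod_cast hW
      rcases hmem W hW' with ⟨U, hU, rfl⟩ | ⟨V, hV, rfl⟩
      · exact ⟨U, by exact_mod_cast hU, hxW.1⟩
      · exact hxW.2
    · intro U hU
      have : U ∩ ⋃₀ (𝒱 : Set (Set X)) ∈ 𝒲 := by
        rw [h𝒲, Finset.mem_union, Finset.mem_image]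
        exact Or.inl ⟨U, hU, rfl⟩
      obtain ⟨y, hyB, hyW⟩ := hB2 _ this
      exact ⟨y, hyB, hyW.1⟩
  · rintro B ⟨hB1, hB2⟩
    constructor
    · intro x hx
      obtain ⟨W, hW, hxW⟩ := hB1 hx
      have hW' : W ∈ 𝒲 := by exact_mod_cast hW
      rcases hmem W hW' with ⟨U, hU, rfl⟩ | ⟨V, hV, rfl⟩
      · exact hxW.2
      · exact ⟨V, by exact_mod_cast hV, hxW.1⟩
    · intro V hV
      have : V ∩ ⋃₀ (𝒰 : Set (Set X)) ∈ 𝒲 := by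
        rw [h𝒲, Finset.mem_union, Finset.mem_image, Finset.mem_image]
        exact Or.inr ⟨V, hV, rfl⟩
      obtain ⟨y, hyB, hyW⟩ := hB2 _ this
      exact ⟨y, hyB, hyW.1⟩

lemma mem_nhds_CL {A : CL X} {u : Set (CL X)} (h : u ∈ 𝓝 A) :
    ∃ 𝒰 : Finset (Set X), (∀ U ∈ 𝒰, IsOpen U) ∧ A ∈ CL.box 𝒰 ∧ CL.box 𝒰 ⊆ u := by
  classical
  rw [TopologicalSpace.nhds_generateFrom (g := {s | ∃ 𝒰 : Finset (Set X),
    (∀ U ∈ 𝒰, IsOpen U) ∧ s = CL.box 𝒰})] at h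
  set P : Set (Set (CL X)) := {s | A ∈ s ∧ s ∈ {s | ∃ 𝒰 : Finset (Set X),
    (∀ U ∈ 𝒰, IsOpen U) ∧ s = CL.box 𝒰}} with hP
  haveI hne : Nonempty P := by
    refine ⟨⟨CL.box {univ}, ⟨⟨?_, ?_⟩, ⟨{univ}, ?_, rfl⟩⟩⟩⟩
    · intro x hx
      exact ⟨univ, by simp, trivial⟩
    · intro U hU
      simp only [Finset.mem_singleton] at hU
      subst hU
      simpa using A.nonempty'
    · intro U hU
      simp only [Finset.mem_singleton] at hU
      subst hU
      exact isOpen_univ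
  have hdir : Directed (· ≥ ·) (fun s : P => Filter.principal (s : Set (CL X))) := by
    rintro ⟨s₁, hA₁, 𝒰, h𝒰o, rfl⟩ ⟨s₂, hA₂, 𝒱, h𝒱o, rfl⟩
    obtain ⟨𝒲, hWo, hAW, hW𝒰, hW𝒱⟩ := box_refine h𝒰o h𝒱o hA₁ hA₂
    exact ⟨⟨CL.box 𝒲, hAW, 𝒲, hWo, rfl⟩, Filter.principal_mono.mpr hW𝒰,
      Filter.principal_mono.mpr hW𝒱⟩
  rw [iInf_subtype'] at h
  rw [Filter.mem_iInf_of_directed hdir] at h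
  obtain ⟨⟨s, hAs, 𝒰, h𝒰o, rfl⟩, hsu⟩ := h
  exact ⟨𝒰, h𝒰o, hAs, Filter.mem_principal.mp hsu⟩

section Main

variable [T2Space X] [FirstCountableTopology X] [LocallyPathConnectedSpace X]

/-- Membership in the canonical path-connected neighborhood. -/
def good (V : Set X) (F : Finset X) (W : X → Set X) (B : Set X) : Prop :=
  B ⊆ V ∪ ⋃ f ∈ F, W f ∧ (B ∩ V).Nonempty ∧ ∀ f ∈ F, (B ∩ W f).Nonempty

theorem main_joined
    (V : Set X) (hVo : IsOpen V) (hVpc : IsPathConnected V)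
    (p : X) (hpV : p ∈ V)
    (F : Finset X) (W : X → Set X)
    (hWo : ∀ f ∈ F, IsOpen (W f)) (hWpc : ∀ f ∈ F, IsPathConnected (W f))
    (hWf : ∀ f ∈ F, f ∈ W f)
    (SCL : CL X) (hSSc : SCL ∈ Sc X) (hSp : IsLimitOf SCL.carrier p)
    (hFS : ↑F ⊆ SCL.carrier) (hpF : p ∉ F) (hSV : SCL.carrier \ V ⊆ ↑F)
    (ACL : CL X) (hASc : ACL ∈ Sc X) (hgoodA : good V F W ACL.carrier) :
    JoinedIn {B : (Sc X) | good V F W (B : CL X).carrier}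
      ⟨ACL, hASc⟩ ⟨SCL, hSSc⟩ := by
  classical
  obtain ⟨hScnt, hSinf, -⟩ := hSSc
  obtain ⟨hAcnt, hAinf, q, hqA⟩ := hASc
  set WW : Set X := V ∪ ⋃ f ∈ F, W f with hWW
  -- the member containing the limit q of A
  have hqmem : q ∈ WW := hgoodA.1 hqA.1
  obtain ⟨O, eq', hOo, hOpc, hqO, heqO, heqpF, hOsub⟩ :
      ∃ (O : Set X) (e : X), IsOpen O ∧ IsPathConnected O ∧ q ∈ O ∧ e ∈ O ∧
        e ∈ insert p (F : Set X) ∧ O ⊆ WW := by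
    rcases hqmem with hqV | hqW
    · exact ⟨V, p, hVo, hVpc, hqV, hpV, mem_insert _ _, subset_union_left⟩
    · obtain ⟨f, hfF, hqf⟩ := mem_iUnion₂.mp hqW
      exact ⟨W f, f, hWo f hfF, hWpc f hfF, hqf, hWf f hfF,
        mem_insert_of_mem _ hfF, (subset_biUnion_of_mem hfF).trans subset_union_right⟩
  -- enumerations
  obtain ⟨a, ha_inj, ha_range⟩ :=
    exists_enum (hAcnt.mono diff_subset) (hAinf.diff (finite_singleton q))
  have haAq : ∀ n, a n ∈ ACL.carrier \ {q} := fun n => ha_range ▸ mem_range_self n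
  have haA : ∀ n, a n ∈ ACL.carrier := fun n => (haAq n).1
  have ha_t : Filter.Tendsto a Filter.atTop (𝓝 q) := tendsto_of_limit hqA.2 ha_inj haA
  obtain ⟨x, hx_inj, hx_range⟩ :=
    exists_enum (hScnt.mono diff_subset) (hSinf.diff (F.finite_toSet.insert p))
  have hxSd : ∀ n, x n ∈ SCL.carrier \ insert p (F : Set X) :=
    fun n => hx_range ▸ mem_range_self n
  have hxS : ∀ n, x n ∈ SCL.carrier := fun n => (hxSd n).1
  have hxV : ∀ n, x n ∈ V := by
    intro n
    by_contra hnV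
    exact (hxSd n).2 (mem_insert_of_mem _ (hSV ⟨hxS n, hnV⟩))
  have hx_t : Filter.Tendsto x Filter.atTop (𝓝 p) := tendsto_of_limit hSp.2 hx_inj hxS
  -- shrinking bases
  obtain ⟨Q, hQo, hQq, hQpc, hQanti, hQsubO, hQbasis⟩ := exists_pc_basis q O hOo hqO
  obtain ⟨P, hPo, hPp, hPpc, hPanti, hPsubV, hPbasis⟩ := exists_pc_basis p V hVo hpV
  -- index machinery
  have index : ∀ (e : ℕ → X) (c : X) (R : ℕ → Set X),
      Filter.Tendsto e Filter.atTop (𝓝 c) → (∀ j, IsOpen (R j)) → (∀ j, c ∈ R j) →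
      ∃ (n₀ : ℕ) (m : ℕ → ℕ), (∀ n, n₀ ≤ n → e n ∈ R (m n)) ∧
        (∀ j, ∃ N, ∀ n, N ≤ n → j ≤ m n) := by
    intro e c R het hro hcr
    have hev : ∀ j, ∃ N, ∀ n, N ≤ n → e n ∈ R j := by
      intro j
      obtain ⟨N, hN⟩ := (Filter.tendsto_atTop'.mp het) (R j) ((hro j).mem_nhds (hcr j))
      exact ⟨N, fun n hn => hN n hn⟩
    choose Nf hNf using hev
    set N' : ℕ → ℕ := fun j => j + (Finset.range (j + 1)).sup Nf with hN'
    set m : ℕ → ℕ := fun n => Nat.findGreatest (fun j => N' j ≤ n) n with hm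
    refine ⟨N' 0, m, ?_, ?_⟩
    · intro n hn
      have hPm : N' (m n) ≤ n :=
        Nat.findGreatest_spec (P := fun j => N' j ≤ n) (Nat.zero_le n) hn
      have h1 : Nf (m n) ≤ N' (m n) :=
        le_trans (Finset.le_sup (Finset.self_mem_range_succ (m n))) (Nat.le_add_left _ _)
      exact hNf (m n) n (le_trans h1 hPm)
    · intro j
      refine ⟨max j (N' j), fun n hn => ?_⟩
      exact Nat.le_findGreatest (le_trans (le_max_left _ _) hn)
        (le_trans (le_max_right _ _) hn)
  obtain ⟨n₀, m, hm1, hm2⟩ := index a q Q ha_t hQo hQq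
  obtain ⟨n₁, k, hk1, hk2⟩ := index x p P hx_t hPo hPp
  -- small-index data
  have hsmall : ∀ n, ∃ (M : Set X) (en : X), IsPathConnected M ∧ a n ∈ M ∧ en ∈ M ∧
      en ∈ insert p (F : Set X) ∧ M ⊆ WW := by
    intro n
    rcases hgoodA.1 (haA n) with h | h
    · exact ⟨V, p, hVpc, h, hpV, mem_insert _ _, subset_union_left⟩
    · obtain ⟨f, hf, hmemf⟩ := mem_iUnion₂.mp h
      exact ⟨W f, f, hWpc f hf, hmemf, hWf f hf, mem_insert_of_mem _ hf,
        (subset_biUnion_of_mem hf).trans subset_union_right⟩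
  choose Msm esm hMpc hMa hMe hesm hMsub using hsmall
  -- unified data for the a-family
  set Bn : ℕ → Set X := fun n => if n₀ ≤ n then Q (m n) else Msm n with hBn
  set en : ℕ → X := fun n => if n₀ ≤ n then q else esm n with hen
  have hJn : ∀ n, JoinedIn (Bn n) (a n) (en n) := by
    intro n
    by_cases h : n₀ ≤ n <;> simp only [hBn, hen, h, if_true, if_false]
    · exact (hQpc (m n)).joinedIn _ (hm1 n h) _ (hQq (m n))
    · exact (hMpc n).joinedIn _ (hMa n) _ (hMe n)
  have henq : ∀ n, n₀ ≤ n → en n = q := by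
    intro n h; simp only [hen, h, if_true]
  have hen_pF : ∀ n, ¬ n₀ ≤ n → en n ∈ insert p (F : Set X) := by
    intro n h; simp only [hen, h, if_false]; exact hesm n
  have hBsub : ∀ n, Bn n ⊆ WW := by
    intro n
    by_cases h : n₀ ≤ n <;> simp only [hBn, h, if_true, if_false]
    · exact (hQsubO (m n)).trans hOsub
    · exact hMsub n
  have hBQ : ∀ j, ∃ N, ∀ n, N ≤ n → Bn n ⊆ Q j := by
    intro j
    obtain ⟨N, hN⟩ := hm2 j
    refine ⟨max n₀ N, fun n hn => ?_⟩
    have h1 : n₀ ≤ n := le_trans (le_max_left _ _) hn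
    simp only [hBn, h1, if_true]
    exact hQanti (hN n (le_trans (le_max_right _ _) hn))
  -- data for the x-family
  set Bx : ℕ → Set X := fun n => if n₁ ≤ n then P (k n) else V with hBx
  have hJx : ∀ n, JoinedIn (Bx n) p (x n) := by
    intro n
    by_cases h : n₁ ≤ n <;> simp only [hBx, h, if_true, if_false]
    · exact (hPpc (k n)).joinedIn _ (hPp (k n)) _ (hk1 n h)
    · exact hVpc.joinedIn _ hpV _ (hxV n)
  have hBxV : ∀ n, Bx n ⊆ V := by
    intro n
    by_cases h : n₁ ≤ n <;> simp only [hBx, h, if_true, if_false]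
    · exact hPsubV (k n)
    · exact Subset.rfl
  have hBxP : ∀ j, ∃ N, ∀ n, N ≤ n → Bx n ⊆ P j := by
    intro j
    obtain ⟨N, hN⟩ := hk2 j
    refine ⟨max n₁ N, fun n hn => ?_⟩
    have h1 : n₁ ≤ n := le_trans (le_max_left _ _) hn
    simp only [hBx, h1, if_true]
    exact hPanti (hN n (le_trans (le_max_right _ _) hn))
  -- witnesses
  obtain ⟨αV, hαVA, hαVV⟩ := hgoodA.2.1
  have hJV : JoinedIn V αV p := hVpc.joinedIn _ hαVV _ hpV
  have hWit : ∀ f : X, ∃ g : ℝ → X, Continuous g ∧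
      (f ∈ F → (∀ t, g t ∈ W f) ∧ g 0 ∈ ACL.carrier ∧
        ∀ t : ℝ, (1 : ℝ)/4 ≤ t → g t = f) := by
    intro f
    by_cases hf : f ∈ F
    · obtain ⟨α, hαA, hαW⟩ := hgoodA.2.2 f hf
      have hJf : JoinedIn (W f) α f := (hWpc f hf).joinedIn _ hαW _ (hWf f hf)
      refine ⟨fun t => hJf.somePath.extend (4 * t),
        hJf.somePath.continuous_extend.comp (continuous_const.mul continuous_id),
        fun _ => ⟨?_, ?_, ?_⟩⟩
      · intro t; exact extend_mem hJf (4 * t)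
      · show hJf.somePath.extend (4 * 0) ∈ ACL.carrier
        rw [mul_zero, Path.extend_zero]; exact hαA
      · intro t ht
        show hJf.somePath.extend (4 * t) = f
        rw [Path.extend_of_one_le _ (by linarith)]
    · exact ⟨fun _ => p, continuous_const, fun h => absurd h hf⟩
  choose θW hθWc hθWp using hWit
  -- the limit path ρ
  have hJR : JoinedIn O q eq' := hOpc.joinedIn _ hqO _ heqO
  set ρ : ℝ → X := fun t => hJR.somePath.extend (2 * t - 1) with hρ
  have hρc : Continuous ρ := hJR.somePath.continuous_extend.comp
    ((continuous_const.mul continuous_id).sub continuous_const)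
  have hρ_early : ∀ t : ℝ, t ≤ 1/2 → ρ t = q := by
    intro t ht
    exact Path.extend_of_le_zero _ (by linarith)
  have hρ1 : ρ 1 = eq' := by
    rw [hρ]
    exact Path.extend_of_one_le _ (by norm_num)
  have hρO : ∀ t, ρ t ∈ O := fun t => extend_mem hJR _
  -- schedules
  set σ : ℕ → ℝ := fun n => 1/2 - (1/2 : ℝ)^(n + 2) with hσ
  set sc : ℕ → ℝ → ℝ := fun n t => (2 : ℝ)^(n + 2) * (t - σ n) with hsc
  have hσ14 : ∀ n, (1/4 : ℝ) ≤ σ n := by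
    intro n
    have h1 : ((1 : ℝ)/2)^(n + 2) ≤ (1/2 : ℝ)^2 :=
      pow_le_pow_of_le_one (by norm_num) (by norm_num) (by omega)
    simp only [hσ]
    norm_num at h1 ⊢
    linarith
  have hσhalf : ∀ n, σ n < 1/2 := by
    intro n
    have : (0 : ℝ) < (1/2 : ℝ)^(n + 2) := by positivity
    simp only [hσ]; linarith
  have hsc_half : ∀ n, sc n (1/2) = 1 := by
    intro n
    simp only [hsc, hσ]
    have : (1 : ℝ)/2 - (1/2 - (1/2 : ℝ)^(n + 2)) = (1/2 : ℝ)^(n + 2) := by ring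
    rw [this, ← mul_pow]
    norm_num
  have hsc_le0 : ∀ n (t : ℝ), t ≤ σ n → sc n t ≤ 0 := by
    intro n t ht
    apply mul_nonpos_of_nonneg_of_nonpos (by positivity)
    linarith
  have hsc_ge1 : ∀ n (t : ℝ), 1/2 ≤ t → 1 ≤ sc n t := by
    intro n t ht
    have h1 : sc n (1/2) ≤ sc n t := by
      simp only [hsc]
      apply mul_le_mul_of_nonneg_left (by linarith) (by positivity)
    rw [hsc_half n] at h1
    exact h1
  have hsc_cont : ∀ n, Continuous (sc n) := fun n => by
    simp only [hsc]
    exact continuous_const.mul (continuous_id.sub continuous_const)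
  have hσfin : ∀ t : ℝ, t < 1/2 → {n : ℕ | σ n < t}.Finite := by
    intro t ht
    have h0 : Filter.Tendsto (fun n : ℕ => ((1 : ℝ)/2)^(n + 2)) Filter.atTop (𝓝 0) := by
      have := tendsto_pow_atTop_nhds_zero_of_lt_one (by norm_num : (0:ℝ) ≤ 1/2)
        (by norm_num : (1/2 : ℝ) < 1)
      exact this.comp (Filter.tendsto_add_atTop_nat 2)
    have hev : ∀ᶠ n in Filter.atTop, ((1 : ℝ)/2)^(n + 2) < 1/2 - t :=
      h0.eventually (eventually_lt_nhds (by linarith) |>.mono fun y hy => hy)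
    obtain ⟨N, hN⟩ := Filter.eventually_atTop.mp hev
    refine (Set.finite_Iio N).subset ?_
    intro n hn
    simp only [mem_Iio]
    by_contra hcon
    push_neg at hcon
    have := hN n hcon
    simp only [hσ, mem_setOf_eq] at hn
    linarith
  have hσinf : ∀ t : ℝ, t < 1/2 → {n : ℕ | t ≤ σ n}.Infinite := by
    intro t ht
    have := (hσfin t ht).infinite_compl
    have hset : {n : ℕ | σ n < t}ᶜ = {n : ℕ | t ≤ σ n} := by
      ext n; simp [not_lt]
    rwa [hset] at this
  -- the moving points
  set θV : ℝ → X := fun t => hJV.somePath.extend (4 * t) with hθV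
  have hθVc : Continuous θV := hJV.somePath.continuous_extend.comp
    (continuous_const.mul continuous_id)
  have hθV_mem : ∀ t, θV t ∈ V := fun t => extend_mem hJV _
  have hθV_late : ∀ t : ℝ, 1/4 ≤ t → θV t = p := by
    intro t ht
    exact Path.extend_of_one_le _ (by linarith)
  have hθV0 : θV 0 = αV := by
    simp only [hθV, mul_zero, Path.extend_zero]
  set γ : ℕ → ℝ → X := fun n t =>
    if t ≤ 1/2 then (hJn n).somePath.extend (sc n t) else (if n₀ ≤ n then ρ t else en n)
    with hγ
  set δ : ℕ → ℝ → X := fun n t =>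
    if t ≤ 1/4 then θV t else (hJx n).somePath.extend (sc n t) with hδ
  set κ : ℝ → Set X := fun t =>
    (⋃ f ∈ F, ({θW f t} : Set X)) ∪ insert (ρ t) (range fun n => γ n t) ∪
      insert (θV t) (range fun n => δ n t) with hκ
  -- continuity of the moving points
  have hγc : ∀ n, Continuous (γ n) := by
    intro n
    simp only [hγ]
    by_cases h : n₀ ≤ n <;> simp only [h, if_true, if_false]
    · apply Continuous.if_le
        ((hJn n).somePath.continuous_extend.comp (hsc_cont n)) hρc
        continuous_id continuous_const
      intro t ht
      replace ht : t = 1/2 := ht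
      simp only [Function.comp]
      rw [ht, hsc_half n, Path.extend_one, henq n h, hρ_early _ le_rfl]
    · apply Continuous.if_le
        ((hJn n).somePath.continuous_extend.comp (hsc_cont n)) continuous_const
        continuous_id continuous_const
      intro t ht
      replace ht : t = 1/2 := ht
      simp only [Function.comp]
      rw [ht, hsc_half n, Path.extend_one]
  have hδc : ∀ n, Continuous (δ n) := by
    intro n
    simp only [hδ]
    apply Continuous.if_le hθVc ((hJx n).somePath.continuous_extend.comp (hsc_cont n))
      continuous_id continuous_const
    intro t ht
    replace ht : t = 1/4 := ht
    simp only [Function.comp]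
    rw [ht, hθV_late _ le_rfl, Path.extend_of_le_zero _ (hsc_le0 n _ (by linarith [hσ14 n]))]
  -- pointwise location of the moving points
  have hγB : ∀ n (t : ℝ), γ n t ∈ Bn n ∪ {ρ t} := by
    intro n t
    simp only [hγ]
    by_cases h : t ≤ 1/2
    · rw [if_pos h]; exact Or.inl (extend_mem (hJn n) _)
    · rw [if_neg h]
      by_cases h2 : n₀ ≤ n
      · rw [if_pos h2]; exact Or.inr rfl
      · rw [if_neg h2]
        refine Or.inl ?_
        have := (hJn n).somePath_mem 1
        simpa using this
  have hδB : ∀ n (t : ℝ), δ n t ∈ Bx n ∪ {θV t} := by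
    intro n t
    simp only [hδ]
    by_cases h : t ≤ 1/4
    · rw [if_pos h]; exact Or.inr rfl
    · rw [if_neg h]; exact Or.inl (extend_mem (hJx n) _)
  have hγ_early : ∀ n (t : ℝ), t ≤ σ n → γ n t = a n := by
    intro n t ht
    simp only [hγ]
    rw [if_pos (le_of_lt (lt_of_le_of_lt ht (hσhalf n)))]
    exact Path.extend_of_le_zero _ (hsc_le0 n t ht)
  have hγ_late : ∀ n (t : ℝ), n₀ ≤ n → 1/2 ≤ t → γ n t = ρ t := by
    intro n t hn ht
    rcases eq_or_lt_of_le ht with heq | hlt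
    · simp only [hγ]
      rw [if_pos heq.symm.le, ← heq, hsc_half n, Path.extend_one, henq n hn,
        hρ_early _ le_rfl]
    · simp only [hγ]
      rw [if_neg (not_le.mpr hlt), if_pos hn]
  have hγ_late_small : ∀ n (t : ℝ), ¬ n₀ ≤ n → 1/2 ≤ t → γ n t = en n := by
    intro n t hn ht
    rcases eq_or_lt_of_le ht with heq | hlt
    · simp only [hγ]
      rw [if_pos heq.symm.le, ← heq, hsc_half n, Path.extend_one]
    · simp only [hγ]
      rw [if_neg (not_le.mpr hlt), if_neg hn]
  have hδ_early : ∀ n (t : ℝ), t ≤ σ n → δ n t = θV t := by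
    intro n t ht
    simp only [hδ]
    by_cases h : t ≤ 1/4
    · rw [if_pos h]
    · rw [if_neg h, Path.extend_of_le_zero _ (hsc_le0 n t ht),
        hθV_late _ (le_of_not_ge h)]
  have hδ_late : ∀ n (t : ℝ), 1/2 ≤ t → δ n t = x n := by
    intro n t ht
    simp only [hδ]
    rw [if_neg (by linarith), Path.extend_of_one_le _ (hsc_ge1 n t ht)]
  have hγ0 : ∀ n, γ n 0 = a n := fun n => hγ_early n 0 (le_trans (by norm_num) (hσ14 n))
  have hδ0 : ∀ n, δ n 0 = θV 0 := fun n => hδ_early n 0 (le_trans (by norm_num) (hσ14 n))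
  -- the κ values: basic membership facts
  have hT1eq : ∀ t : ℝ, (⋃ f ∈ F, ({θW f t} : Set X)) = (fun f => θW f t) '' ↑F := by
    intro t; ext z
    simp [eq_comm]
  have hT1fin : ∀ t : ℝ, (⋃ f ∈ F, ({θW f t} : Set X)).Finite := by
    intro t; rw [hT1eq]; exact F.finite_toSet.image _
  have hθWW : ∀ f ∈ F, ∀ t : ℝ, θW f t ∈ W f := fun f hf t => (hθWp f hf).1 t
  have hθWA : ∀ f ∈ F, θW f 0 ∈ ACL.carrier := fun f hf => (hθWp f hf).2.1
  have hθWlate : ∀ f ∈ F, ∀ t : ℝ, 1/4 ≤ t → θW f t = f := fun f hf => (hθWp f hf).2.2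
  have hκ_sub : ∀ t : ℝ, κ t ⊆ WW := by
    intro t z hz
    simp only [hκ] at hz
    rcases hz with (hz | hz) | hz
    · obtain ⟨f, hf, hzf⟩ := mem_iUnion₂.mp hz
      rw [mem_singleton_iff.mp hzf]
      exact Or.inr (mem_iUnion₂.mpr ⟨f, hf, hθWW f hf t⟩)
    · rcases mem_insert_iff.mp hz with rfl | ⟨n, rfl⟩
      · exact hOsub (hρO t)
      · rcases hγB n t with h | h
        · exact hBsub n h
        · exact mem_of_eq_of_mem (mem_singleton_iff.mp h) (hOsub (hρO t))
    · rcases mem_insert_iff.mp hz with rfl | ⟨n, rfl⟩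
      · exact Or.inl (hθV_mem t)
      · rcases hδB n t with h | h
        · exact Or.inl (hBxV n h)
        · exact mem_of_eq_of_mem (mem_singleton_iff.mp h) (Or.inl (hθV_mem t))
  have hρκ : ∀ t : ℝ, ρ t ∈ κ t := by
    intro t; simp only [hκ]
    exact Or.inl (Or.inr (mem_insert _ _))
  have hθVκ : ∀ t : ℝ, θV t ∈ κ t := by
    intro t; simp only [hκ]
    exact Or.inr (mem_insert _ _)
  have hκ_good : ∀ t : ℝ, good V F W (κ t) := by
    intro t
    refine ⟨hκ_sub t, ⟨θV t, hθVκ t, hθV_mem t⟩, fun f hf => ⟨θW f t, ?_, hθWW f hf t⟩⟩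
    simp only [hκ]
    exact Or.inl (Or.inl (mem_iUnion₂.mpr ⟨f, hf, rfl⟩))
  -- the family conditions
  have hAγ : ∀ t₀ : ℝ, ∀ U : Set X, IsOpen U → ρ t₀ ∈ U →
      ∃ J ∈ 𝓝 t₀, ∃ N, ∀ n, N ≤ n → ∀ t ∈ J, γ n t ∈ U ∨ γ n t = ρ t := by
    intro t₀ U hUo hlU
    by_cases ht₀ : t₀ ≤ 1/2
    · have hqU : q ∈ U := by rw [← hρ_early t₀ ht₀]; exact hlU
      obtain ⟨j, hj⟩ := hQbasis U (hUo.mem_nhds hqU)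
      obtain ⟨N, hN⟩ := hBQ j
      refine ⟨univ, Filter.univ_mem, N, fun n hn t _ => ?_⟩
      rcases hγB n t with h | h
      · exact Or.inl (hj (hN n hn h))
      · exact Or.inr (mem_singleton_iff.mp h)
    · refine ⟨Ioi (1/2 : ℝ), Ioi_mem_nhds (not_le.mp ht₀), n₀, fun n hn t ht => ?_⟩
      exact Or.inr (hγ_late n t hn (le_of_lt ht))
  have hAδ : ∀ t₀ : ℝ, ∀ U : Set X, IsOpen U → θV t₀ ∈ U →
      ∃ J ∈ 𝓝 t₀, ∃ N, ∀ n, N ≤ n → ∀ t ∈ J, δ n t ∈ U ∨ δ n t = θV t := by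
    intro t₀ U hUo hlU
    by_cases ht₀ : t₀ < 1/4
    · refine ⟨Iio (1/4 : ℝ), Iio_mem_nhds ht₀, 0, fun n _ t ht => Or.inr ?_⟩
      simp only [hδ]
      rw [if_pos (le_of_lt ht)]
    · have hpU : p ∈ U := by rw [← hθV_late t₀ (not_lt.mp ht₀)]; exact hlU
      obtain ⟨j, hj⟩ := hPbasis U (hUo.mem_nhds hpU)
      obtain ⟨N, hN⟩ := hBxP j
      refine ⟨univ, Filter.univ_mem, N, fun n hn t _ => ?_⟩
      rcases hδB n t with h | h
      · exact Or.inl (hj (hN n hn h))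
      · exact Or.inr (mem_singleton_iff.mp h)
  obtain ⟨hUSCγ, hLSCγ, htγ⟩ := family_lemma hγc hρc hAγ
  obtain ⟨hUSCδ, hLSCδ, htδ⟩ := family_lemma hδc hθVc hAδ
  -- closedness, countability, nonemptiness
  have hκ_closed : ∀ t : ℝ, IsClosed (κ t) := by
    intro t
    simp only [hκ]
    refine IsClosed.union (IsClosed.union ?_ ?_) ?_
    · exact (hT1fin t).isClosed
    · exact ((htγ t).isCompact_insert_range).isClosed
    · exact ((htδ t).isCompact_insert_range).isClosed
  have hκ_ne : ∀ t : ℝ, (κ t).Nonempty := fun t => ⟨ρ t, hρκ t⟩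
  have hκ_cnt : ∀ t : ℝ, (κ t).Countable := by
    intro t
    simp only [hκ]
    exact (((hT1fin t).countable).union ((countable_range _).insert _)).union
      ((countable_range _).insert _)
  -- the values are nontrivial convergent sequences
  have hκ_Sc : ∀ t : ℝ, IsNontrivialConvergentSeq (κ t) := by
    intro t
    refine ⟨hκ_cnt t, ?_, ?_⟩
    · by_cases ht : t < 1/2
      · have h1 : (a '' {n : ℕ | t ≤ σ n}).Infinite := (hσinf t ht).image (ha_inj.injOn)
        refine h1.mono ?_
        rintro z ⟨n, hn, rfl⟩
        simp only [hκ]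
        exact Or.inl (Or.inr (mem_insert_of_mem _ ⟨n, hγ_early n t hn⟩))
      · have h1 : (range x).Infinite := infinite_range_of_injective hx_inj
        refine h1.mono ?_
        rintro z ⟨n, rfl⟩
        simp only [hκ]
        exact Or.inr (mem_insert_of_mem _ ⟨n, hδ_late n t (not_lt.mp ht)⟩)
    · by_cases ht : t < 1/2
      · -- limit is q
        refine ⟨q, ?_, ?_⟩
        · have := hρκ t
          rwa [hρ_early t (le_of_lt ht)] at this
        · intro U hUo hqU
          obtain ⟨j, hj⟩ := hQbasis U (hUo.mem_nhds hqU)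
          obtain ⟨N, hN⟩ := hBQ j
          have hsub : κ t \ U ⊆ ((⋃ f ∈ F, ({θW f t} : Set X)) ∪
              ((fun n => γ n t) '' (Iio N))) ∪
              ({θV t} ∪ ((fun n => δ n t) '' {n : ℕ | σ n < t})) := by
            rintro z ⟨hz, hzU⟩
            simp only [hκ] at hz
            rcases hz with (hz | hz) | hz
            · exact Or.inl (Or.inl hz)
            · rcases mem_insert_iff.mp hz with rfl | ⟨n, rfl⟩
              · exact absurd (by rw [hρ_early t (le_of_lt ht)]; exact hqU) hzU
              · rcases lt_or_ge n N with hnN | hnN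
                · exact Or.inl (Or.inr ⟨n, hnN, rfl⟩)
                · exfalso
                  rcases hγB n t with h | h
                  · exact hzU (hj (hN n hnN h))
                  · exact hzU (mem_of_eq_of_mem
                      ((mem_singleton_iff.mp h).trans (hρ_early t (le_of_lt ht))) hqU)
            · rcases mem_insert_iff.mp hz with rfl | ⟨n, rfl⟩
              · exact Or.inr (Or.inl rfl)
              · rcases le_or_gt t (σ n) with hns | hns
                · exact Or.inr (Or.inl (mem_singleton_iff.mpr (hδ_early n t hns)))
                · exact Or.inr (Or.inr ⟨n, hns, rfl⟩)
          refine Set.Finite.subset ?_ hsub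
          exact ((hT1fin t).union ((finite_Iio N).image _)).union
            ((finite_singleton _).union (((hσfin t ht)).image _))
      · -- limit is p
        push_neg at ht
        have ht4 : (1/4 : ℝ) ≤ t := by linarith
        refine ⟨p, ?_, ?_⟩
        · have := hθVκ t
          rwa [hθV_late t ht4] at this
        · intro U hUo hpU
          have hxfin : {n : ℕ | x n ∉ U}.Finite := by
            refine ((hSp.2 U hUo hpU).preimage (hx_inj.injOn)).subset ?_
            intro n hn
            exact ⟨hxS n, hn⟩
          have hsub : κ t \ U ⊆ ((⋃ f ∈ F, ({θW f t} : Set X)) ∪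
              ({ρ t} ∪ ((fun n => γ n t) '' (Iio n₀)))) ∪
              ((fun n => δ n t) '' {n : ℕ | x n ∉ U}) := by
            rintro z ⟨hz, hzU⟩
            simp only [hκ] at hz
            rcases hz with (hz | hz) | hz
            · exact Or.inl (Or.inl hz)
            · rcases mem_insert_iff.mp hz with rfl | ⟨n, rfl⟩
              · exact Or.inl (Or.inr (Or.inl rfl))
              · by_cases hn : n₀ ≤ n
                · exact Or.inl (Or.inr (Or.inl (mem_singleton_iff.mpr (hγ_late n t hn ht))))
                · exact Or.inl (Or.inr (Or.inr ⟨n, not_le.mp hn, rfl⟩))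
            · rcases mem_insert_iff.mp hz with rfl | ⟨n, rfl⟩
              · exact absurd (by rw [hθV_late t ht4]; exact hpU) hzU
              · refine Or.inr ⟨n, ?_, rfl⟩
                exact fun hc => hzU (mem_of_eq_of_mem (hδ_late n t ht) hc)
          refine Set.Finite.subset ?_ hsub
          exact ((hT1fin t).union ((finite_singleton _).union ((finite_Iio n₀).image _))).union
            (hxfin.image _)
  -- semicontinuity of κ
  have hκU : USC κ := by
    refine USC.congr (((USC.finsetUnion F (fun f t => ({θW f t} : Set X))
      (fun f _ => USC.point (hθWc f))).union hUSCγ).union hUSCδ) ?_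
    intro t
    rw [hκ]
  have hκL : LSC κ := by
    refine LSC.congr (((LSC.finsetUnion F (fun f t => ({θW f t} : Set X))
      (fun f _ => LSC.point (hθWc f))).union hLSCγ).union hLSCδ) ?_
    intro t
    rw [hκ]
  -- endpoint values
  have hκ0 : κ 0 = ACL.carrier := by
    simp only [hκ]
    apply Subset.antisymm
    · rintro z hz
      rcases hz with (hz | hz) | hz
      · obtain ⟨f, hf, hzf⟩ := mem_iUnion₂.mp hz
        exact mem_of_eq_of_mem (mem_singleton_iff.mp hzf) (hθWA f hf)
      · rcases mem_insert_iff.mp hz with rfl | ⟨n, rfl⟩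
        · exact mem_of_eq_of_mem (hρ_early 0 (by norm_num)) hqA.1
        · exact mem_of_eq_of_mem (hγ0 n) (haA n)
      · rcases mem_insert_iff.mp hz with rfl | ⟨n, rfl⟩
        · exact mem_of_eq_of_mem hθV0 hαVA
        · exact mem_of_eq_of_mem ((hδ0 n).trans hθV0) hαVA
    · intro z hz
      by_cases hzq : z = q
      · subst hzq
        refine Or.inl (Or.inr ?_)
        rw [← hρ_early 0 (by norm_num)]
        exact mem_insert _ _
      · have : z ∈ range a := by rw [ha_range]; exact ⟨hz, hzq⟩
        obtain ⟨n, rfl⟩ := this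
        exact Or.inl (Or.inr (mem_insert_of_mem _ ⟨n, hγ0 n⟩))
  have hpFS : insert p (F : Set X) ⊆ SCL.carrier := by
    rintro y hy
    rcases mem_insert_iff.mp hy with rfl | hy
    · exact hSp.1
    · exact hFS hy
  have hκ1 : κ 1 = SCL.carrier := by
    simp only [hκ]
    apply Subset.antisymm
    · rintro z hz
      rcases hz with (hz | hz) | hz
      · obtain ⟨f, hf, hzf⟩ := mem_iUnion₂.mp hz
        exact mem_of_eq_of_mem
          ((mem_singleton_iff.mp hzf).trans (hθWlate f hf 1 (by norm_num)))
          (hFS (Finset.mem_coe.mpr hf))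
      · rcases mem_insert_iff.mp hz with rfl | ⟨n, rfl⟩
        · exact mem_of_eq_of_mem hρ1 (hpFS heqpF)
        · by_cases hn : n₀ ≤ n
          · exact mem_of_eq_of_mem ((hγ_late n 1 hn (by norm_num)).trans hρ1) (hpFS heqpF)
          · exact mem_of_eq_of_mem (hγ_late_small n 1 hn (by norm_num)) (hpFS (hen_pF n hn))
      · rcases mem_insert_iff.mp hz with rfl | ⟨n, rfl⟩
        · exact mem_of_eq_of_mem (hθV_late 1 (by norm_num)) hSp.1
        · exact mem_of_eq_of_mem (hδ_late n 1 (by norm_num)) (hxS n)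
    · intro z hz
      by_cases hzp : z = p
      · subst hzp
        refine Or.inr ?_
        rw [← hθV_late 1 (by norm_num)]
        exact mem_insert _ _
      · by_cases hzF : z ∈ (F : Set X)
        · refine Or.inl (Or.inl ?_)
          refine mem_iUnion₂.mpr ⟨z, by exact_mod_cast hzF, ?_⟩
          exact mem_singleton_iff.mpr (hθWlate z (by exact_mod_cast hzF) 1 (by norm_num)).symm
        · have : z ∈ range x := by
            rw [hx_range]
            refine ⟨hz, ?_⟩
            intro hcon
            rcases mem_insert_iff.mp hcon with rfl | h
            · exact hzp rfl
            · exact hzF h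
          obtain ⟨n, rfl⟩ := this
          exact Or.inr (mem_insert_of_mem _ ⟨n, hδ_late n 1 (by norm_num)⟩)
  -- assembling the path
  have hcCL : ∀ t : ℝ, IsClosed (κ t) ∧ (κ t).Nonempty := fun t => ⟨hκ_closed t, hκ_ne t⟩
  set c : ℝ → CL X := fun t => ⟨κ t, hκ_closed t, hκ_ne t⟩ with hcdef
  have hcc : Continuous c := by
    apply continuous_into_CL
    · intro U hU
      exact hκU U hU
    · intro U hU
      exact hκL U hU
  have hmemSc : ∀ t : ℝ, c t ∈ Sc X := fun t => hκ_Sc t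
  have hccs : Continuous (fun t : ℝ => (⟨c t, hmemSc t⟩ : (Sc X))) := hcc.subtype_mk _
  refine ⟨⟨⟨fun st => ⟨c st.1, hmemSc st.1⟩, ?_⟩, ?_, ?_⟩, ?_⟩
  · exact hccs.comp continuous_subtype_val
  · exact Subtype.ext (CL.ext' (by simpa using hκ0))
  · exact Subtype.ext (CL.ext' (by simpa using hκ1))
  · intro st
    exact hκ_good st.1

end Main

end HyperAux

/-- Let `X` be a first countable Hausdorff space.  If `X` is locally pathwise
connected (every point has a neighborhood basis of pathwise connected sets), then so
is `S_c(X)`. -/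
theorem stmt_13 {X : Type*} [TopologicalSpace X] [T2Space X]
    [FirstCountableTopology X] [LocallyPathConnectedSpace X] :
    LocallyPathConnectedSpace (Sc X) := by
  classical
  constructor
  intro x
  rw [Filter.hasBasis_self]
  intro t ht
  obtain ⟨u, hu, hut⟩ := (mem_nhds_subtype (Sc X) x t).mp ht
  obtain ⟨SCL, hSSc⟩ := x
  obtain ⟨𝒰, h𝒰o, hS𝒰, h𝒰u⟩ := HyperAux.mem_nhds_CL hu
  have hSSc' := hSSc
  obtain ⟨hScnt, hSinf, p, hSp⟩ := hSSc'
  -- the path-connected neighborhood of the limit point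
  set UP : Set X := ⋂₀ {U : Set X | U ∈ 𝒰 ∧ p ∈ U} ∩ ⋃₀ (𝒰 : Set (Set X)) with hUP
  have hUPo : IsOpen UP := by
    refine IsOpen.inter ?_ (isOpen_sUnion (fun U hU => h𝒰o U (by exact_mod_cast hU)))
    exact Set.Finite.isOpen_sInter
      (𝒰.finite_toSet.subset fun U hU => Finset.mem_coe.mpr hU.1)
      (fun U hU => h𝒰o U hU.1)
  have hpUP : p ∈ UP := ⟨mem_sInter.mpr fun U hU => hU.2, hS𝒰.1 hSp.1⟩
  set V : Set X := pathComponentIn UP p with hV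
  have hVo : IsOpen V := hUPo.pathComponentIn p
  have hVpc : IsPathConnected V := isPathConnected_pathComponentIn hpUP
  have hpV : p ∈ V := mem_pathComponentIn_self hpUP
  have hVsub : V ⊆ UP := pathComponentIn_subset
  have hSVfin : (SCL.carrier \ V).Finite := hSp.2 V hVo hpV
  -- witnesses for members of 𝒰 missing p
  have hw0 : ∀ U : Set X, ∃ y, (U ∈ 𝒰 ∧ p ∉ U) → y ∈ SCL.carrier ∧ y ∈ U := by
    intro U
    by_cases h : U ∈ 𝒰 ∧ p ∉ U
    · obtain ⟨y, hy1, hy2⟩ := hS𝒰.2 U h.1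
      exact ⟨y, fun _ => ⟨hy1, hy2⟩⟩
    · exact ⟨p, fun hc => absurd hc h⟩
  choose w hw using hw0
  set F : Finset X := hSVfin.toFinset ∪ (𝒰.filter (fun U => p ∉ U)).image w with hF
  have hFmem : ∀ z, z ∈ F ↔ z ∈ SCL.carrier \ V ∨ ∃ U ∈ 𝒰, p ∉ U ∧ z = w U := by
    intro z
    rw [hF, Finset.mem_union, Set.Finite.mem_toFinset]
    apply or_congr Iff.rfl
    rw [Finset.mem_image]
    constructor
    · rintro ⟨U, hU, rfl⟩
      have h2 := Finset.mem_filter.mp hU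
      exact ⟨U, h2.1, h2.2, rfl⟩
    · rintro ⟨U, hU, hpU, rfl⟩
      exact ⟨U, Finset.mem_filter.mpr ⟨hU, hpU⟩, rfl⟩
  have hFS : (F : Set X) ⊆ SCL.carrier := by
    intro z hz
    rcases (hFmem z).mp (Finset.mem_coe.mp hz) with h | ⟨U, hU, hpU, rfl⟩
    · exact h.1
    · exact (hw U ⟨hU, hpU⟩).1
  have hpF : p ∉ F := by
    intro hc
    rcases (hFmem p).mp hc with h | ⟨U, hU, hpU, he⟩
    · exact h.2 hpV
    · exact hpU (he ▸ (hw U ⟨hU, hpU⟩).2)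
  have hSV : SCL.carrier \ V ⊆ (F : Set X) := by
    intro z hz
    exact Finset.mem_coe.mpr ((hFmem z).mpr (Or.inl hz))
  -- the path-connected neighborhoods for the finite part
  set W : X → Set X := fun f =>
    pathComponentIn (⋂₀ {U : Set X | U ∈ 𝒰 ∧ f ∈ U} ∩ ⋃₀ (𝒰 : Set (Set X))) f with hWdef
  have hWdata : ∀ f ∈ F, IsOpen (W f) ∧ IsPathConnected (W f) ∧ f ∈ W f ∧
      W f ⊆ ⋂₀ {U : Set X | U ∈ 𝒰 ∧ f ∈ U} ∧ W f ⊆ ⋃₀ (𝒰 : Set (Set X)) := by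
    intro f hf
    have hfS : f ∈ SCL.carrier := hFS (Finset.mem_coe.mpr hf)
    have hIo : IsOpen (⋂₀ {U : Set X | U ∈ 𝒰 ∧ f ∈ U} ∩ ⋃₀ (𝒰 : Set (Set X))) := by
      refine IsOpen.inter ?_ (isOpen_sUnion (fun U hU => h𝒰o U (by exact_mod_cast hU)))
      exact Set.Finite.isOpen_sInter
        (𝒰.finite_toSet.subset fun U hU => Finset.mem_coe.mpr hU.1)
        (fun U hU => h𝒰o U hU.1)
    have hfin : f ∈ ⋂₀ {U : Set X | U ∈ 𝒰 ∧ f ∈ U} ∩ ⋃₀ (𝒰 : Set (Set X)) :=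
      ⟨mem_sInter.mpr fun U hU => hU.2, hS𝒰.1 hfS⟩
    exact ⟨hIo.pathComponentIn f, isPathConnected_pathComponentIn hfin,
      mem_pathComponentIn_self hfin,
      pathComponentIn_subset.trans inter_subset_left,
      pathComponentIn_subset.trans inter_subset_right⟩
  have hWo : ∀ f ∈ F, IsOpen (W f) := fun f hf => (hWdata f hf).1
  have hWpc : ∀ f ∈ F, IsPathConnected (W f) := fun f hf => (hWdata f hf).2.1
  have hWf : ∀ f ∈ F, f ∈ W f := fun f hf => (hWdata f hf).2.2.1
  -- every good set lies in the box of 𝒰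
  have hgood_box : ∀ B : CL X, HyperAux.good V F W B.carrier → B ∈ CL.box 𝒰 := by
    rintro B ⟨h1, h2, h3⟩
    constructor
    · intro z hz
      rcases h1 hz with h | h
      · exact (hVsub.trans inter_subset_right) h
      · obtain ⟨f, hf, hzf⟩ := mem_iUnion₂.mp h
        exact (hWdata f hf).2.2.2.2 hzf
    · intro U hU
      by_cases hpU : p ∈ U
      · obtain ⟨y, hyB, hyV⟩ := h2
        exact ⟨y, hyB, mem_sInter.mp (hVsub hyV).1 U ⟨hU, hpU⟩⟩
      · have hUf : U ∈ 𝒰.filter (fun U => p ∉ U) := Finset.mem_filter.mpr ⟨hU, hpU⟩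
        have hwf : w U ∈ F := Finset.mem_union_right _ (Finset.mem_image_of_mem w hUf)
        obtain ⟨y, hyB, hyW⟩ := h3 (w U) hwf
        exact ⟨y, hyB, mem_sInter.mp ((hWdata (w U) hwf).2.2.2.1 hyW) U
          ⟨hU, (hw U ⟨hU, hpU⟩).2⟩⟩
  -- S itself is good
  have hSgood : HyperAux.good V F W SCL.carrier := by
    refine ⟨?_, ⟨p, hSp.1, hpV⟩,
      fun f hf => ⟨f, hFS (Finset.mem_coe.mpr hf), hWf f hf⟩⟩
    intro z hz
    by_cases hzV : z ∈ V
    · exact Or.inl hzV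
    · have hzF : z ∈ F := Finset.mem_coe.mp (hSV ⟨hz, hzV⟩)
      exact Or.inr (mem_iUnion₂.mpr ⟨z, hzF, hWf z hzF⟩)
  -- the box of the new family
  set 𝒲' : Finset (Set X) := insert V (F.image W) with h𝒲'
  have h𝒲'mem : ∀ U : Set X, U ∈ 𝒲' ↔ U = V ∨ ∃ f ∈ F, U = W f := by
    intro U
    rw [h𝒲', Finset.mem_insert, Finset.mem_image]
    apply or_congr Iff.rfl
    constructor
    · rintro ⟨f, hf, rfl⟩; exact ⟨f, hf, rfl⟩
    · rintro ⟨f, hf, rfl⟩; exact ⟨f, hf, rfl⟩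
  have h𝒲'o : ∀ U ∈ 𝒲', IsOpen U := by
    intro U hU
    rcases (h𝒲'mem U).mp hU with rfl | ⟨f, hf, rfl⟩
    · exact hVo
    · exact hWo f hf
  have hsU : ⋃₀ (𝒲' : Set (Set X)) = V ∪ ⋃ f ∈ F, W f := by
    ext z
    constructor
    · rintro ⟨U, hU, hzU⟩
      rcases (h𝒲'mem U).mp (by exact_mod_cast hU) with rfl | ⟨f, hf, rfl⟩
      · exact Or.inl hzU
      · exact Or.inr (mem_iUnion₂.mpr ⟨f, hf, hzU⟩)
    · rintro (h | h)
      · exact ⟨V, by exact_mod_cast (h𝒲'mem V).mpr (Or.inl rfl), h⟩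
      · obtain ⟨f, hf, hz⟩ := mem_iUnion₂.mp h
        exact ⟨W f, by exact_mod_cast (h𝒲'mem (W f)).mpr (Or.inr ⟨f, hf, rfl⟩), hz⟩
  have hNbox : ∀ B : CL X, B ∈ CL.box 𝒲' ↔ HyperAux.good V F W B.carrier := by
    intro B
    constructor
    · rintro ⟨h1, h2⟩
      refine ⟨by rwa [hsU] at h1, ?_, fun f hf => ?_⟩
      · exact h2 V ((h𝒲'mem V).mpr (Or.inl rfl))
      · exact h2 (W f) ((h𝒲'mem (W f)).mpr (Or.inr ⟨f, hf, rfl⟩))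
    · rintro ⟨h1, h2, h3⟩
      refine ⟨by rwa [hsU], fun U hU => ?_⟩
      rcases (h𝒲'mem U).mp hU with rfl | ⟨f, hf, rfl⟩
      · exact h2
      · exact h3 f hf
  -- conclusion
  refine ⟨{B : (Sc X) | HyperAux.good V F W (B : CL X).carrier}, ?_, ?_, ?_⟩
  · have hNeq : {B : (Sc X) | HyperAux.good V F W (B : CL X).carrier} =
        Subtype.val ⁻¹' (CL.box 𝒲') := by
      ext B
      simp only [mem_setOf_eq, mem_preimage]
      exact (hNbox B.1).symm
    rw [hNeq]
    exact ((HyperAux.isOpen_box h𝒲'o).preimage continuous_subtype_val).mem_nhds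
      ((hNbox SCL).mpr hSgood)
  · refine ⟨⟨SCL, hSSc⟩, hSgood, ?_⟩
    rintro ⟨BCL, hBSc⟩ hB
    exact (HyperAux.main_joined V hVo hVpc p hpV F W hWo hWpc hWf SCL hSSc hSp hFS hpF
      hSV BCL hBSc hB).symm
  · intro B hB
    exact hut (h𝒰u (hgood_box B.1 hB))
end
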